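/- arXiv:0809.3626 — 3 statements merged into one kernel-verified Lean document; each statement's English description precedes it below -/
import Mathlib

section
/- Let Z be a Banach space with an FDD (E_i), and let V = (v_i) be a 1-unconditional normalized basic sequence with biorthogonal functionals V* = (v_i*). Then (E_i) satisfies subsequential V upper block estimates in Z if and only if (E_i*) satisfies subsequential V* lower block estimates in Z^(*). Moreover, if (E_i) is bimonotone in Z, then for any C >= 1, (E_i) satisfies subsequential C-V upper block estimates in Z if and only if (E_i*) satisfies subsequential C-V* lower block estimates in Z^(*). -/
open Filter Topology Set

noncomputable section

/-- A bundled (real) Banach space. -/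
structure BanachSp : Type 1 where
  carrier : Type
  [nacg : NormedAddCommGroup carrier]
  [nsp : NormedSpace ℝ carrier]
  [complete : CompleteSpace carrier]

attribute [instance] BanachSp.nacg BanachSp.nsp BanachSp.complete

instance : CoeSort BanachSp Type := ⟨BanachSp.carrier⟩

section Seqs

variable {V : Type*} [NormedAddCommGroup V] [NormedSpace ℝ V]
variable {W : Type*} [NormedAddCommGroup W] [NormedSpace ℝ W]
variable {X : Type*} [NormedAddCommGroup X] [NormedSpace ℝ X]

/-- `DomBy u x C` : the sequence `(u i)` `C`-dominates the sequence `(x i)`, i.e.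
`‖∑ a i • x i‖ ≤ C * ‖∑ a i • u i‖` for all finitely supported scalars. -/
def DomBy (u : ℕ → V) (x : ℕ → X) (C : ℝ) : Prop :=
  ∀ (a : ℕ → ℝ) (n : ℕ),
    ‖∑ i ∈ Finset.range n, a i • x i‖ ≤ C * ‖∑ i ∈ Finset.range n, a i • u i‖

def IsNormalized (v : ℕ → V) : Prop := ∀ i, ‖v i‖ = 1

/-- A basic sequence: nonzero vectors with uniformly bounded partial sum projections. -/
def IsBasicSeq (v : ℕ → V) : Prop :=
  (∀ i, v i ≠ 0) ∧ ∃ K : ℝ, 1 ≤ K ∧ ∀ (a : ℕ → ℝ) (m n : ℕ), m ≤ n →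
    ‖∑ i ∈ Finset.range m, a i • v i‖ ≤ K * ‖∑ i ∈ Finset.range n, a i • v i‖

/-- `1`-unconditionality : changing signs of coefficients does not change the norm. -/
def IsOneUnconditional (v : ℕ → V) : Prop :=
  ∀ (a ε : ℕ → ℝ), (∀ i, ε i = 1 ∨ ε i = -1) → ∀ n : ℕ,
    ‖∑ i ∈ Finset.range n, (ε i * a i) • v i‖ = ‖∑ i ∈ Finset.range n, a i • v i‖

/-- Bimonotonicity of a basic sequence: interval projections have norm at most one. -/
def IsBimonotoneSeq (v : ℕ → V) : Prop :=
  ∀ (a : ℕ → ℝ) (p q n : ℕ), q ≤ n →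
    ‖∑ i ∈ Finset.Ico p q, a i • v i‖ ≤ ‖∑ i ∈ Finset.range n, a i • v i‖

/-- `(v i)` is `D`-right-dominant : if `m i ≤ n i` for all `i` then `(v (m i))` is
`D`-dominated by `(v (n i))`. -/
def RightDominantC (v : ℕ → V) (D : ℝ) : Prop :=
  ∀ m n : ℕ → ℕ, StrictMono m → StrictMono n → (∀ i, m i ≤ n i) →
    DomBy (fun i => v (n i)) (fun i => v (m i)) D

def RightDominant (v : ℕ → V) : Prop := ∃ D : ℝ, 1 ≤ D ∧ RightDominantC v D

/-- `(v i)` is `D`-left-dominant : if `m i ≤ n i` for all `i` then `(v (m i))`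
`D`-dominates `(v (n i))`. -/
def LeftDominantC (v : ℕ → V) (D : ℝ) : Prop :=
  ∀ m n : ℕ → ℕ, StrictMono m → StrictMono n → (∀ i, m i ≤ n i) →
    DomBy (fun i => v (m i)) (fun i => v (n i)) D

/-- `C`-block-stability: any two normalized block bases whose blocks run along the same
successive intervals are `C`-equivalent. -/
def BlockStableC (v : ℕ → V) (C : ℝ) : Prop :=
  ∀ (x y : ℕ → V) (k : ℕ → ℕ), StrictMono k →
    (∀ i, x i ∈ Submodule.span ℝ (v '' Set.Ico (k i) (k (i+1)))) →
    (∀ i, y i ∈ Submodule.span ℝ (v '' Set.Ico (k i) (k (i+1)))) →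
    (∀ i, ‖x i‖ = 1) → (∀ i, ‖y i‖ = 1) → DomBy x y C

def BlockStable (v : ℕ → V) : Prop := ∃ C : ℝ, 1 ≤ C ∧ BlockStableC v C

/-- A basic sequence is shrinking if every functional is small on far tails of its span. -/
def ShrinkingSeq (v : ℕ → V) : Prop :=
  ∀ φ : V →L[ℝ] ℝ, ∀ δ : ℝ, 0 < δ → ∃ m : ℕ, ∀ (a : ℕ → ℝ) (n : ℕ),
    ‖∑ i ∈ Finset.Ico m n, a i • v i‖ ≤ 1 →
    |φ (∑ i ∈ Finset.Ico m n, a i • v i)| ≤ δ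

/-- A basic sequence is boundedly complete if series with bounded partial sums converge. -/
def BoundedlyCompleteSeq (v : ℕ → V) : Prop :=
  ∀ a : ℕ → ℝ, (∃ M : ℝ, ∀ n, ‖∑ i ∈ Finset.range n, a i • v i‖ ≤ M) →
    ∃ s : V, Tendsto (fun n => ∑ i ∈ Finset.range n, a i • v i) atTop (𝓝 s)

/-- `(w i)` represents (isometrically) the sequence of biorthogonal functionals of the
`1`-unconditional basic sequence `(v i)`: the norm of `∑ a i • w i` is the supremum of the
pairings `∑ a i * b i` over `b` with `‖∑ b i • v i‖ ≤ 1`. -/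
def IsBiorthDual (v : ℕ → V) (w : ℕ → W) : Prop :=
  ∀ (a : ℕ → ℝ) (n : ℕ),
    IsLUB {r : ℝ | ∃ b : ℕ → ℝ, ‖∑ i ∈ Finset.range n, b i • v i‖ ≤ 1 ∧
      r = ∑ i ∈ Finset.range n, a i * b i} ‖∑ i ∈ Finset.range n, a i • w i‖

def WeaklyNullSeq (x : ℕ → X) : Prop :=
  ∀ φ : X →L[ℝ] ℝ, Tendsto (fun i => φ (x i)) atTop (𝓝 0)

end Seqs

/-- A finite-dimensional decomposition (FDD) of `Z` : finite-dimensional subspaces `E i`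
together with the coordinate projections `P i`, such that every `z` is the sum of its
coordinates, uniquely. -/
structure FDD (Z : Type*) [NormedAddCommGroup Z] [NormedSpace ℝ Z] where
  E : ℕ → Submodule ℝ Z
  finDim : ∀ n, FiniteDimensional ℝ (E n)
  P : ℕ → Z →L[ℝ] Z
  mem_E : ∀ i z, P i z ∈ E i
  sum_eq : ∀ z : Z, Tendsto (fun n => ∑ i ∈ Finset.range n, P i z) atTop (𝓝 z)
  unique : ∀ (z : Z) (f : ℕ → Z), (∀ i, f i ∈ E i) →
    Tendsto (fun n => ∑ i ∈ Finset.range n, f i) atTop (𝓝 z) → ∀ i, f i = P i z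

namespace FDD

variable {Z : Type*} [NormedAddCommGroup Z] [NormedSpace ℝ Z]
variable {V : Type*} [NormedAddCommGroup V] [NormedSpace ℝ V]
variable {W : Type*} [NormedAddCommGroup W] [NormedSpace ℝ W]

/-- The canonical projection `P^E_s` onto the span of `(E i : i ∈ s)`. -/
def proj (F : FDD Z) (s : Finset ℕ) : Z →L[ℝ] Z := ∑ i ∈ s, F.P i

/-- The support of a vector with respect to the FDD. -/
def supp (F : FDD Z) (z : Z) : Set ℕ := {i | F.P i z ≠ 0}

/-- `min supp_E z`. -/
def minSupp (F : FDD Z) (z : Z) : ℕ := sInf (F.supp z)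

/-- A block sequence with respect to an FDD: supports lie in successive intervals. -/
def IsBlockSeq (F : FDD Z) (z : ℕ → Z) : Prop :=
  ∃ k : ℕ → ℕ, StrictMono k ∧ ∀ i, F.supp (z i) ⊆ Set.Ico (k i) (k (i+1))

/-- Bimonotonicity: all interval projections have norm at most `1`. -/
def Bimonotone (F : FDD Z) : Prop :=
  ∀ (m n : ℕ) (z : Z), ‖F.proj (Finset.Icc m n) z‖ ≤ ‖z‖

/-- `C` is the projection constant: the supremum of norms of interval projections. -/
def IsProjConst (F : FDD Z) (C : ℝ) : Prop :=
  IsLUB {r : ℝ | ∃ (m n : ℕ) (z : Z), ‖z‖ ≤ 1 ∧ r = ‖F.proj (Finset.Icc m n) z‖} C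

/-- The FDD is shrinking: every functional is the norm limit of its finite-dimensional
restrictions, i.e. the biorthogonal functionals form an FDD of the dual. -/
def Shrinking (F : FDD Z) : Prop :=
  ∀ φ : Z →L[ℝ] ℝ,
    Tendsto (fun n => ‖φ - φ.comp (F.proj (Finset.range n))‖) atTop (𝓝 0)

/-- The FDD is boundedly complete. -/
def BoundedlyComplete (F : FDD Z) : Prop :=
  ∀ f : ℕ → Z, (∀ i, f i ∈ F.E i) →
    (∃ M : ℝ, ∀ n, ‖∑ i ∈ Finset.range n, f i‖ ≤ M) →
    ∃ z : Z, Tendsto (fun n => ∑ i ∈ Finset.range n, f i) atTop (𝓝 z)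

/-- `H` is a blocking of `F`. -/
def IsBlockingOf (H F : FDD Z) : Prop :=
  ∃ m : ℕ → ℕ, m 0 = 0 ∧ StrictMono m ∧
    ∀ j, H.E j = ⨆ i ∈ Finset.Ico (m j) (m (j+1)), F.E i

/-- The closed span `Z_m` of the subspaces `E i`, `i ≥ m` (the first `m` coordinates
removed). -/
def tail (F : FDD Z) (m : ℕ) : Set Z :=
  closure (↑(⨆ i ∈ Set.Ici m, F.E i) : Set Z)

/-- Subsequential `C`-`V`-upper block estimates. -/
def UpperBlockC (F : FDD Z) (v : ℕ → V) (C : ℝ) : Prop :=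
  ∀ z : ℕ → Z, F.IsBlockSeq z → (∀ i, ‖z i‖ = 1) →
    DomBy (fun i => v (F.minSupp (z i))) z C

def UpperBlock (F : FDD Z) (v : ℕ → V) : Prop := ∃ C : ℝ, 1 ≤ C ∧ F.UpperBlockC v C

/-- Subsequential `C`-`V`-lower block estimates. -/
def LowerBlockC (F : FDD Z) (v : ℕ → V) (C : ℝ) : Prop :=
  ∀ z : ℕ → Z, F.IsBlockSeq z → (∀ i, ‖z i‖ = 1) →
    DomBy z (fun i => v (F.minSupp (z i))) C

def LowerBlock (F : FDD Z) (v : ℕ → V) : Prop := ∃ C : ℝ, 1 ≤ C ∧ F.LowerBlockC v C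

/-- A functional supported (w.r.t. the biorthogonal FDD `(E i ^*)`) on the finite set `s`. -/
def dualSupported (F : FDD Z) (s : Finset ℕ) (φ : Z →L[ℝ] ℝ) : Prop :=
  ∀ z : Z, φ z = φ (F.proj s z)

/-- A block sequence of the biorthogonal functionals `(E i ^*)`. -/
def IsDualBlockSeq (F : FDD Z) (φ : ℕ → Z →L[ℝ] ℝ) : Prop :=
  ∃ k : ℕ → ℕ, StrictMono k ∧
    ∀ i, F.dualSupported (Finset.Ico (k i) (k (i+1))) (φ i)

/-- `min supp` of a functional w.r.t. `(E i ^*)`. -/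
def dualMinSupp (F : FDD Z) (φ : Z →L[ℝ] ℝ) : ℕ :=
  sInf {j | ∃ z, φ (F.P j z) ≠ 0}

/-- The biorthogonal FDD `(E i ^*)` satisfies subsequential `C`-`V^*`-lower block
estimates in `Z^(*)`. -/
def DualLowerBlockC (F : FDD Z) (w : ℕ → W) (C : ℝ) : Prop :=
  ∀ φ : ℕ → Z →L[ℝ] ℝ, F.IsDualBlockSeq φ → (∀ i, ‖φ i‖ = 1) →
    DomBy φ (fun i => w (F.dualMinSupp (φ i))) C

def DualLowerBlock (F : FDD Z) (w : ℕ → W) : Prop := ∃ C : ℝ, 1 ≤ C ∧ F.DualLowerBlockC w C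

/-- The biorthogonal FDD `(E i ^*)` satisfies subsequential `C`-`V`-upper block
estimates. -/
def DualUpperBlockC (F : FDD Z) (w : ℕ → W) (C : ℝ) : Prop :=
  ∀ φ : ℕ → Z →L[ℝ] ℝ, F.IsDualBlockSeq φ → (∀ i, ‖φ i‖ = 1) →
    DomBy (fun i => w (F.dualMinSupp (φ i))) φ C

/-- A `δ̄`-skipped block sequence w.r.t. the FDD. -/
def IsSkippedBlock (F : FDD Z) (δ : ℕ → ℝ) (y : ℕ → Z) : Prop :=
  (∀ i, ‖y i‖ = 1) ∧ ∃ k : ℕ → ℕ, k 0 = 0 ∧ StrictMono k ∧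
    ∀ i, ‖F.proj (Finset.Ioo (k i) (k (i+1))) (y i) - y i‖ < δ i

end FDD

section Trees

variable {V : Type*} [NormedAddCommGroup V] [NormedSpace ℝ V]
variable {W : Type*} [NormedAddCommGroup W] [NormedSpace ℝ W]

/-- The finite set `{n 0, …, n (2l+1)}`, i.e. the branch node of level `l+1` along the
strictly increasing sequence `n`. -/
def branchSet (n : ℕ → ℕ) (l : ℕ) : Finset ℕ := Finset.image n (Finset.range (2*l+2))

/-- A normalized weakly null even tree in `X` (indexed by finite sets of naturals, which
correspond to finite strictly increasing sequences). -/
def WNEvenTree {X : Type*} [NormedAddCommGroup X] [NormedSpace ℝ X]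
    (x : Finset ℕ → X) : Prop :=
  (∀ s : Finset ℕ, Even s.card → ‖x s‖ = 1) ∧
  ∀ s : Finset ℕ, Odd s.card →
    ∀ φ : X →L[ℝ] ℝ, Tendsto (fun k => φ (x (insert k s))) atTop (𝓝 0)

/-- Subsequential `C`-`V`-upper tree estimates. -/
def UpperTreeC (v : ℕ → V) (X : Type*) [NormedAddCommGroup X] [NormedSpace ℝ X]
    (C : ℝ) : Prop :=
  ∀ x : Finset ℕ → X, WNEvenTree x →
    ∃ n : ℕ → ℕ, StrictMono n ∧
      DomBy (fun l => v (n (2*l))) (fun l => x (branchSet n l)) C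

/-- Subsequential `V`-upper tree estimates. -/
def UpperTree (v : ℕ → V) (X : Type*) [NormedAddCommGroup X] [NormedSpace ℝ X] : Prop :=
  ∃ C : ℝ, 1 ≤ C ∧ UpperTreeC v X C

/-- A normalized `w^*`-null even tree in the dual of `X`. -/
def WStarNullEvenTree {X : Type*} [NormedAddCommGroup X] [NormedSpace ℝ X]
    (f : Finset ℕ → (X →L[ℝ] ℝ)) : Prop :=
  (∀ s : Finset ℕ, Even s.card → ‖f s‖ = 1) ∧
  ∀ s : Finset ℕ, Odd s.card →
    ∀ u : X, Tendsto (fun k => f (insert k s) u) atTop (𝓝 0)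

/-- Subsequential `C`-`V^*`-lower `w^*` tree estimates for the dual of `X`. -/
def LowerWStarTreeC (w : ℕ → W) (X : Type*) [NormedAddCommGroup X] [NormedSpace ℝ X]
    (C : ℝ) : Prop :=
  ∀ f : Finset ℕ → (X →L[ℝ] ℝ), WStarNullEvenTree f →
    ∃ n : ℕ → ℕ, StrictMono n ∧
      DomBy (fun l => f (branchSet n l)) (fun l => w (n (2*l))) C

end Trees

section Maps

variable {X : Type*} [NormedAddCommGroup X] [NormedSpace ℝ X]
variable {Y : Type*} [NormedAddCommGroup Y] [NormedSpace ℝ Y]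

/-- `X` embeds isomorphically into `Y`. -/
def Embeds (X Y : Type*) [NormedAddCommGroup X] [NormedSpace ℝ X]
    [NormedAddCommGroup Y] [NormedSpace ℝ Y] : Prop :=
  ∃ T : X →L[ℝ] Y, ∃ c : ℝ, 0 < c ∧ ∀ x : X, c * ‖x‖ ≤ ‖T x‖

/-- `X` is a quotient of `Z` (there is a bounded linear surjection `Z → X`). -/
def IsQuotientOf (X Z : Type*) [NormedAddCommGroup X] [NormedSpace ℝ X]
    [NormedAddCommGroup Z] [NormedSpace ℝ Z] : Prop :=
  ∃ Q : Z →L[ℝ] X, Function.Surjective Q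

/-- A map between dual spaces is `w^*`-`w^*` continuous. -/
def WStarWStarContinuous {X Z : Type*} [NormedAddCommGroup X] [NormedSpace ℝ X]
    [NormedAddCommGroup Z] [NormedSpace ℝ Z]
    (T : StrongDual ℝ X →L[ℝ] StrongDual ℝ Z) : Prop :=
  Continuous (fun φ : WeakDual ℝ X =>
    StrongDual.toWeakDual (T (WeakDual.toStrongDual φ)))

end Maps

/-!
Both directions pair block sequences of `(E i)` with block sequences of `(E i ^*)`.

Given a normalized block sequence `(φ i)` of `(E i ^*)` with `m i = min supp φ i`, choose
normalized blocks `z i` with `min supp z i = m i`, supported where `φ i` is, and with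
`φ i (z i)` close to `1 / B`, `B` the projection constant. For `c` in the unit ball of
`[v (m i)]`, the upper estimate bounds the vector `∑ (c i / φ i (z i)) • z i`, on which
`∑ a i • φ i` takes the value `∑ a i * c i`; the supremum of these values is
`‖∑ a i • w (m i)‖`.

Conversely, given a normalized block sequence `(z i)` of `(E i)` with `m i = min supp z i`,
restrict a functional `g` norming `∑ a i • z i` to the coordinates `[m i, m (i + 1))` and add
`δ`-small functionals living on `E (m i)`, so that the pieces form a block sequence of
`(E i ^*)` with `min supp = m i`. Pairing `(v (m i))` with `(w (m i))` and applying the lower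
estimate to the pieces gives `‖∑ a i • z i‖ ≤ C * B * ‖∑ a i • v (m i)‖` as `δ → 0`.

In the bimonotone case `B = 1`, so the constant `C` is preserved in both directions.
-/

lemma le_of_continuousAt_of_eventually_le {f : ℝ → ℝ} {a x : ℝ} (hf : ContinuousAt f a)
    (h : ∀ᶠ c in 𝓝[>] a, x ≤ f c) : x ≤ f a :=
  ge_of_tendsto (hf.tendsto.mono_left nhdsWithin_le_nhds) h

lemma ContinuousLinearMap.exists_norm_le_one_lt_apply {E : Type*} [NormedAddCommGroup E]
    [NormedSpace ℝ E] (φ : E →L[ℝ] ℝ) {r : ℝ} (hr : r < ‖φ‖) : ∃ y : E, ‖y‖ ≤ 1 ∧ r < φ y := by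
  obtain ⟨y, hy, hry⟩ := φ.exists_lt_apply_of_lt_opNorm hr
  rw [Real.norm_eq_abs] at hry
  rcases le_or_gt 0 (φ y) with hφy | hφy
  · exact ⟨y, hy.le, by rwa [abs_of_nonneg hφy] at hry⟩
  · exact ⟨-y, by rw [norm_neg]; exact hy.le, by rwa [abs_of_neg hφy, ← map_neg] at hry⟩

lemma exists_norm_le_one_apply_ne_zero_mul_nonneg {E : Type*} [NormedAddCommGroup E]
    [NormedSpace ℝ E] {e : E} (he : e ≠ 0) (r : ℝ) :
    ∃ h : E →L[ℝ] ℝ, ‖h‖ ≤ 1 ∧ h e ≠ 0 ∧ 0 ≤ r * h e := by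
  obtain ⟨h, hh, hhe⟩ := exists_dual_vector ℝ e (norm_ne_zero_iff.2 he)
  have hhe0 : 0 < h e := by rw [hhe]; exact norm_pos_iff.2 he
  rcases le_or_gt 0 r with hr | hr
  · exact ⟨h, hh.le, hhe0.ne', mul_nonneg hr hhe0.le⟩
  · refine ⟨-h, by rw [norm_neg, hh], by simp [hhe0.ne'], ?_⟩
    rw [neg_apply]
    nlinarith

section Sequences

variable {V : Type*} [NormedAddCommGroup V] [NormedSpace ℝ V]
variable {W : Type*} [NormedAddCommGroup W] [NormedSpace ℝ W]
variable {v : ℕ → V} {w : ℕ → W}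

/- Shrinking one coefficient `c j` to `t` writes the new vector as a convex combination of
`∑ c i • v i` and its sign flip at `j`, which has the same norm. -/
lemma IsOneUnconditional.norm_sum_update_le (hv : IsOneUnconditional v) (c : ℕ → ℝ) {j : ℕ}
    {t : ℝ} (ht : |t| ≤ |c j|) (N : ℕ) :
    ‖∑ i ∈ Finset.range N, Function.update c j t i • v i‖ ≤
      ‖∑ i ∈ Finset.range N, c i • v i‖ := by
  obtain ⟨p, q, hp, hq, hpq, rfl⟩ : t ∈ segment ℝ (c j) (-c j) := by
    rw [segment_eq_uIcc, Set.mem_uIcc]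
    cases abs_le.1 ht; cases abs_cases (c j) <;> grind
  set ε : ℕ → ℝ := Function.update 1 j (-1)
  have hε : ∀ i, ε i = 1 ∨ ε i = -1 := fun i => by
    by_cases hi : i = j <;> simp [ε, hi]
  have hsplit : ∑ i ∈ Finset.range N, Function.update c j (p • c j + q • -c j) i • v i =
      p • ∑ i ∈ Finset.range N, c i • v i + q • ∑ i ∈ Finset.range N, (ε i * c i) • v i := by
    simp only [Finset.smul_sum, smul_smul, ← Finset.sum_add_distrib, ← add_smul]
    refine Finset.sum_congr rfl fun i _ => congrArg (· • v i) ?_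
    by_cases hi : i = j
    · subst hi; simp [ε]
    · simp only [ε, Function.update_apply, hi, if_false, Pi.one_apply, smul_eq_mul]
      linear_combination (c i) * hpq.symm
  rw [hsplit]
  refine (norm_add_le _ _).trans_eq ?_
  rw [norm_smul_of_nonneg hp, norm_smul_of_nonneg hq, hv c ε hε N, ← add_mul, hpq, one_mul]

lemma IsOneUnconditional.norm_sum_le_of_abs_le (hv : IsOneUnconditional v) {a b : ℕ → ℝ}
    {N : ℕ} (h : ∀ i < N, |a i| ≤ |b i|) :
    ‖∑ i ∈ Finset.range N, a i • v i‖ ≤ ‖∑ i ∈ Finset.range N, b i • v i‖ := by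
  let c : ℕ → ℕ → ℝ := fun j i => if i < j then a i else b i
  have hc : ∀ j ≤ N, ‖∑ i ∈ Finset.range N, c j i • v i‖ ≤ ‖∑ i ∈ Finset.range N, b i • v i‖ := by
    intro j
    induction j with
    | zero => intro _; simp [c]
    | succ j ih =>
      intro hj
      have hupd : c (j + 1) = Function.update (c j) j (a j) := by
        funext i
        simp only [c, Function.update_apply]
        split_ifs <;> first | rfl | omega | (subst_vars; rfl)
      rw [hupd]
      exact (hv.norm_sum_update_le _ (by simpa [c] using h j hj) N).trans (ih (by omega))
  refine le_of_eq_of_le ?_ (hc N le_rfl)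
  exact congrArg _ (Finset.sum_congr rfl fun i hi => by simp [c, Finset.mem_range.1 hi])

lemma IsOneUnconditional.norm_sum_abs_smul (hv : IsOneUnconditional v) (a : ℕ → ℝ) (N : ℕ) :
    ‖∑ i ∈ Finset.range N, |a i| • v i‖ = ‖∑ i ∈ Finset.range N, a i • v i‖ :=
  le_antisymm (hv.norm_sum_le_of_abs_le fun _ _ => (abs_abs _).le)
    (hv.norm_sum_le_of_abs_le fun _ _ => (abs_abs _).ge)

/-- The coefficients of `∑ i < n, a i • v (m i)` with respect to `v`. -/
def spread (m : ℕ → ℕ) (n : ℕ) (a : ℕ → ℝ) (j : ℕ) : ℝ :=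
  ∑ i ∈ Finset.range n, if m i = j then a i else 0

lemma sum_spread_smul {M : Type*} [AddCommMonoid M] [Module ℝ M] {m : ℕ → ℕ} {n N : ℕ}
    (hN : ∀ i < n, m i < N) (a : ℕ → ℝ) (g : ℕ → M) :
    ∑ j ∈ Finset.range N, spread m n a j • g j = ∑ i ∈ Finset.range n, a i • g (m i) := by
  simp only [spread, Finset.sum_smul, ite_smul, zero_smul]
  rw [Finset.sum_comm]
  refine Finset.sum_congr rfl fun i hi => ?_
  rw [Finset.sum_ite_eq, if_pos (Finset.mem_range.2 (hN i (Finset.mem_range.1 hi)))]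

lemma spread_apply {m : ℕ → ℕ} (hm : Function.Injective m) (n : ℕ) (a : ℕ → ℝ) (i : ℕ) :
    spread m n a (m i) = if i < n then a i else 0 := by
  simp only [spread, hm.eq_iff, Finset.sum_ite_eq', Finset.mem_range]

lemma spread_eq_zero {m : ℕ → ℕ} {j : ℕ} (hj : j ∉ Set.range m) (n : ℕ) (a : ℕ → ℝ) :
    spread m n a j = 0 :=
  Finset.sum_eq_zero fun i _ => if_neg fun h => hj ⟨i, h⟩

lemma abs_spread_le {m : ℕ → ℕ} (hm : Function.Injective m) {n : ℕ} {a c : ℕ → ℝ}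
    (h : ∀ i < n, |a i| ≤ |c (m i)|) (j : ℕ) : |spread m n a j| ≤ |c j| := by
  by_cases hj : j ∈ Set.range m
  · obtain ⟨i, rfl⟩ := hj
    rw [spread_apply hm]
    split_ifs with hi
    · exact h i hi
    · simp
  · simp [spread_eq_zero hj]

lemma IsOneUnconditional.comp_strictMono (hv : IsOneUnconditional v) {m : ℕ → ℕ}
    (hm : StrictMono m) : IsOneUnconditional (v ∘ m) := by
  have hmono : ∀ (a b : ℕ → ℝ) (n : ℕ), (∀ i < n, |a i| ≤ |b i|) →
      ‖∑ i ∈ Finset.range n, a i • v (m i)‖ ≤ ‖∑ i ∈ Finset.range n, b i • v (m i)‖ := by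
    intro a b n h
    have hN : ∀ i < n, m i < m n := fun i hi => hm hi
    rw [← sum_spread_smul hN, ← sum_spread_smul hN]
    refine hv.norm_sum_le_of_abs_le fun j _ => abs_spread_le hm.injective (fun i hi => ?_) j
    rw [spread_apply hm.injective, if_pos hi]
    exact h i hi
  intro a ε hε n
  have habs : ∀ i, |ε i * a i| = |a i| := fun i => by
    rcases hε i with h | h <;> simp [h]
  exact le_antisymm (hmono _ _ n fun i _ => (habs i).le) (hmono _ _ n fun i _ => (habs i).ge)

lemma IsBiorthDual.sum_mul_le (hw : IsBiorthDual v w) (a b : ℕ → ℝ) (n : ℕ) :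
    ∑ i ∈ Finset.range n, a i * b i ≤
      ‖∑ i ∈ Finset.range n, b i • v i‖ * ‖∑ i ∈ Finset.range n, a i • w i‖ := by
  refine le_of_continuousAt_of_eventually_le (f := fun s => s * _) (by fun_prop)
    (eventually_nhdsWithin_of_forall fun s (hs : _ < s) => ?_)
  have hs0 : 0 < s := (norm_nonneg _).trans_lt hs
  have hfeas : ‖∑ i ∈ Finset.range n, (s⁻¹ * b i) • v i‖ ≤ 1 := by
    simp only [← smul_smul, ← Finset.smul_sum, norm_smul_of_nonneg (inv_nonneg.2 hs0.le)]
    exact inv_mul_le_one_of_le₀ hs.le hs0.le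
  have hle := (hw a n).1 ⟨_, hfeas, rfl⟩
  rw [← div_le_iff₀' hs0, div_eq_inv_mul, Finset.mul_sum]
  exact le_of_eq_of_le (Finset.sum_congr rfl fun i _ => by ring) hle

lemma IsBiorthDual.comp_strictMono (hv : IsOneUnconditional v) (hw : IsBiorthDual v w)
    {m : ℕ → ℕ} (hm : StrictMono m) : IsBiorthDual (v ∘ m) (w ∘ m) := by
  intro a n
  have hN : ∀ i < n, m i < m n := fun i hi => hm hi
  have hpair : ∀ c : ℕ → ℝ, ∑ j ∈ Finset.range (m n), spread m n a j * c j =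
      ∑ i ∈ Finset.range n, a i * c (m i) :=
    fun c => by simpa only [smul_eq_mul] using sum_spread_smul hN a c
  simp only [Function.comp_apply]
  rw [← sum_spread_smul hN a w]
  convert hw (spread m n a) (m n) using 2
  ext r
  constructor
  · rintro ⟨c, hc, rfl⟩
    refine ⟨spread m n c, by rwa [sum_spread_smul hN c v], ?_⟩
    rw [hpair]
    exact Finset.sum_congr rfl fun i hi => by
      rw [spread_apply hm.injective, if_pos (Finset.mem_range.1 hi)]
  · rintro ⟨b, hb, rfl⟩
    refine ⟨b ∘ m, ?_, hpair b⟩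
    rw [← sum_spread_smul hN _ v]
    exact (hv.norm_sum_le_of_abs_le fun j _ =>
      abs_spread_le hm.injective (fun _ _ => le_rfl) j).trans hb

lemma IsBiorthDual.sum_abs_mul_le (hw : IsBiorthDual v w) (hv : IsOneUnconditional v)
    (a t : ℕ → ℝ) (n : ℕ) :
    ∑ i ∈ Finset.range n, |a i| * t i ≤
      ‖∑ i ∈ Finset.range n, a i • v i‖ * ‖∑ i ∈ Finset.range n, t i • w i‖ := by
  rw [← hv.norm_sum_abs_smul a n]
  exact (Finset.sum_congr rfl fun i _ => mul_comm _ _).trans_le (hw.sum_mul_le t _ n)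

end Sequences

/- Test `∑ a i • φ i` on `∑ (c i / φ i (z i)) • z i`. -/
lemma DomBy.mul_sum_mul_le {X U : Type*} [NormedAddCommGroup X] [NormedSpace ℝ X]
    [NormedAddCommGroup U] [NormedSpace ℝ U] {u : ℕ → U} (hu : IsOneUnconditional u)
    {z : ℕ → X} {C : ℝ} (hC : 0 ≤ C) (hz : DomBy u z C) {φ : ℕ → X →L[ℝ] ℝ}
    (hφ : ∀ i j, i ≠ j → φ i (z j) = 0) {ρ K : ℝ} (hρ : 0 < ρ) (hK : 0 ≤ K)
    (hφz : ∀ i, ρ ≤ K * φ i (z i)) (a c : ℕ → ℝ) (n : ℕ) :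
    ρ * ∑ i ∈ Finset.range n, a i * c i ≤
      C * K * ‖∑ i ∈ Finset.range n, c i • u i‖ * ‖∑ i ∈ Finset.range n, a i • φ i‖ := by
  have hpos : ∀ i, 0 < φ i (z i) := fun i => pos_of_mul_pos_right (hρ.trans_le (hφz i)) hK
  set d : ℕ → ℝ := fun i => c i / φ i (z i)
  set ξ := ∑ j ∈ Finset.range n, d j • z j
  have hφξ : ∀ i ∈ Finset.range n, φ i ξ = c i := fun i hi => by
    simp only [ξ, map_sum, map_smul, smul_eq_mul]
    rw [Finset.sum_eq_single_of_mem i hi fun j _ hji => by rw [hφ i j hji.symm, mul_zero]]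
    exact div_mul_cancel₀ _ (hpos i).ne'
  have hξ : (∑ i ∈ Finset.range n, a i • φ i) ξ = ∑ i ∈ Finset.range n, a i * c i := by
    simp only [sum_apply, smul_apply, smul_eq_mul]
    exact Finset.sum_congr rfl fun i hi => by rw [hφξ i hi]
  have hd : ∀ i < n, |ρ * d i| ≤ |K * c i| := fun i _ => by
    rw [abs_mul, abs_mul, abs_of_pos hρ, abs_of_nonneg hK, abs_div, abs_of_pos (hpos i),
      mul_div_assoc', div_le_iff₀ (hpos i), mul_comm K, mul_assoc]
    exact (mul_comm _ _).trans_le (mul_le_mul_of_nonneg_left (hφz i) (abs_nonneg _))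
  have hscale : ∀ (t : ℝ) (e : ℕ → ℝ), 0 ≤ t →
      ‖∑ i ∈ Finset.range n, (t * e i) • u i‖ = t * ‖∑ i ∈ Finset.range n, e i • u i‖ :=
    fun t e ht => by simp only [← smul_smul, ← Finset.smul_sum, norm_smul_of_nonneg ht]
  have hnξ : ρ * ‖ξ‖ ≤ C * K * ‖∑ i ∈ Finset.range n, c i • u i‖ :=
    calc ρ * ‖ξ‖ ≤ ρ * (C * ‖∑ i ∈ Finset.range n, d i • u i‖) :=
          mul_le_mul_of_nonneg_left (hz d n) hρ.le
      _ = C * ‖∑ i ∈ Finset.range n, (ρ * d i) • u i‖ := by rw [hscale ρ d hρ.le]; ring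
      _ ≤ C * ‖∑ i ∈ Finset.range n, (K * c i) • u i‖ :=
          mul_le_mul_of_nonneg_left (hu.norm_sum_le_of_abs_le hd) hC
      _ = C * K * ‖∑ i ∈ Finset.range n, c i • u i‖ := by rw [hscale K c hK]; ring
  calc ρ * ∑ i ∈ Finset.range n, a i * c i
      ≤ ρ * (‖∑ i ∈ Finset.range n, a i • φ i‖ * ‖ξ‖) := by
        rw [← hξ]
        exact mul_le_mul_of_nonneg_left
          ((Real.le_norm_self _).trans (ContinuousLinearMap.le_opNorm _ _)) hρ.le
    _ ≤ _ := by nlinarith [norm_nonneg (∑ i ∈ Finset.range n, a i • φ i)]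

namespace FDD

variable {Z : Type*} [NormedAddCommGroup Z] [NormedSpace ℝ Z] (F : FDD Z)
variable {V : Type*} [NormedAddCommGroup V] [NormedSpace ℝ V] {v : ℕ → V}
variable {W : Type*} [NormedAddCommGroup W] [NormedSpace ℝ W] {w : ℕ → W}

lemma proj_apply (s : Finset ℕ) (z : Z) : F.proj s z = ∑ i ∈ s, F.P i z :=
  sum_apply _ _ _

lemma P_apply_of_mem {i : ℕ} {e : Z} (he : e ∈ F.E i) (j : ℕ) :
    F.P j e = if j = i then e else 0 := by
  refine (F.unique e (fun l => if l = i then e else 0) (fun l => ?_) ?_ j).symm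
  · split_ifs with h
    · exact h ▸ he
    · exact zero_mem _
  · refine tendsto_atTop_of_eventually_const (i₀ := i + 1) fun n hn => ?_
    simp only [Finset.sum_ite_eq', Finset.mem_range]
    rw [if_pos (by omega)]

lemma P_P (i j : ℕ) (z : Z) : F.P j (F.P i z) = if j = i then F.P i z else 0 :=
  F.P_apply_of_mem (F.mem_E i z) j

lemma P_proj (s : Finset ℕ) (j : ℕ) (z : Z) :
    F.P j (F.proj s z) = if j ∈ s then F.P j z else 0 := by
  simp only [proj_apply, map_sum, P_P, Finset.sum_ite_eq]

lemma proj_proj_self (s : Finset ℕ) (z : Z) : F.proj s (F.proj s z) = F.proj s z := by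
  rw [F.proj_apply s (F.proj s z)]
  exact (Finset.sum_congr rfl fun j hj => by rw [P_proj, if_pos hj]).trans (F.proj_apply s z).symm

lemma P_eq_proj (p : ℕ) : F.P p = F.proj (Finset.Ico p (p + 1)) := by
  simp [proj]

lemma sum_proj_Ico_consecutive {k : ℕ → ℕ} (hk : Monotone k) (n : ℕ) :
    ∑ i ∈ Finset.range n, F.proj (Finset.Ico (k i) (k (i + 1))) =
      F.proj (Finset.Ico (k 0) (k n)) := by
  induction n with
  | zero => simp [proj]
  | succ n ih =>
    rw [Finset.sum_range_succ, ih, proj, proj, proj,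
      Finset.sum_Ico_consecutive _ (hk n.zero_le) (hk n.le_succ)]

lemma proj_eq_zero {s : Finset ℕ} {z : Z} (h : ∀ j ∈ s, F.P j z = 0) : F.proj s z = 0 := by
  rw [proj_apply]
  exact Finset.sum_eq_zero h

lemma proj_eq_self {s : Finset ℕ} {z : Z} (h : F.supp z ⊆ s) : F.proj s z = z := by
  obtain ⟨N, hN⟩ := s.exists_nat_subset_range
  refine tendsto_nhds_unique (tendsto_atTop_of_eventually_const (i₀ := N) fun n hn => ?_)
    (F.sum_eq z)
  rw [proj_apply]
  refine (Finset.sum_subset (hN.trans (Finset.range_subset_range.2 hn)) fun j _ hj => ?_).symm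
  by_contra hne
  exact hj (h hne)

lemma supp_proj_subset (s : Finset ℕ) (z : Z) : F.supp (F.proj s z) ⊆ s := by
  intro j hj
  by_contra hjs
  exact hj (by rw [P_proj, if_neg (Finset.mem_coe.not.1 hjs)])

lemma supp_P_subset (p : ℕ) (z : Z) : F.supp (F.P p z) ⊆ {p} := by
  intro j hj
  by_contra hjp
  exact hj (by rw [P_P, if_neg (Set.mem_singleton_iff.not.1 hjp)])

lemma supp_smul {c : ℝ} (hc : c ≠ 0) (z : Z) : F.supp (c • z) = F.supp z := by
  ext j
  simp [supp, hc]

lemma P_minSupp_ne_zero {z : Z} (hz : z ≠ 0) : F.P (F.minSupp z) z ≠ 0 := by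
  refine Nat.sInf_mem (s := F.supp z) ?_
  by_contra hempty
  have hP : ∀ j, F.P j z = 0 := fun j => by_contra fun hj => hempty ⟨j, hj⟩
  exact hz (tendsto_nhds_unique (F.sum_eq z) (by simp [hP]))

lemma minSupp_le {z : Z} {j : ℕ} (hj : j ∈ F.supp z) : F.minSupp z ≤ j :=
  Nat.sInf_le hj

lemma minSupp_eq {z : Z} {p : ℕ} (hp : F.P p z ≠ 0) (hz : F.supp z ⊆ Set.Ici p) :
    F.minSupp z = p :=
  le_antisymm (F.minSupp_le hp) (le_csInf ⟨p, hp⟩ fun _ hj => hz hj)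

lemma exists_norm_proj_Ico_le [CompleteSpace Z] :
    ∃ B : ℝ, 1 ≤ B ∧ ∀ a b, ‖F.proj (Finset.Ico a b)‖ ≤ B := by
  obtain ⟨K, hK⟩ := banach_steinhaus (g := fun n => F.proj (Finset.range n)) fun z => by
    obtain ⟨M, hM⟩ := (F.sum_eq z).norm.bddAbove_range
    exact ⟨M, fun n => by rw [proj_apply]; exact hM (Set.mem_range_self n)⟩
  refine ⟨max (2 * K) 1, le_max_right _ _, fun a b => ?_⟩
  rcases le_total a b with hab | hba
  · rw [proj, Finset.sum_Ico_eq_sub _ hab]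
    calc ‖F.proj (Finset.range b) - F.proj (Finset.range a)‖
        ≤ K + K := (norm_sub_le _ _).trans (add_le_add (hK b) (hK a))
      _ ≤ max (2 * K) 1 := by rw [← two_mul]; exact le_max_left _ _
  · simp [proj, Finset.Ico_eq_empty_of_le hba]

variable {F}

lemma Bimonotone.norm_proj_Ico_le_one (hF : F.Bimonotone) (a b : ℕ) :
    ‖F.proj (Finset.Ico a b)‖ ≤ 1 := by
  refine ContinuousLinearMap.opNorm_le_bound _ zero_le_one fun z => ?_
  cases b with
  | zero => simp [proj]
  | succ b => rw [Finset.Ico_add_one_right_eq_Icc, one_mul]; exact hF a b z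

lemma norm_P_le {B : ℝ} (hB : ∀ a b, ‖F.proj (Finset.Ico a b)‖ ≤ B) (p : ℕ) : ‖F.P p‖ ≤ B := by
  rw [P_eq_proj]
  exact hB _ _

lemma dualSupported.smul {s : Finset ℕ} {φ : Z →L[ℝ] ℝ} (h : F.dualSupported s φ) (c : ℝ) :
    F.dualSupported s (c • φ) := fun z => by simp only [smul_apply, h z]

lemma dualSupported.apply_eq_zero {s : Finset ℕ} {φ : Z →L[ℝ] ℝ} (h : F.dualSupported s φ)
    {z : Z} (hz : ∀ j ∈ s, F.P j z = 0) : φ z = 0 := by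
  rw [h, F.proj_eq_zero hz, map_zero]

lemma dualSupported.apply_P_eq_zero {s : Finset ℕ} {φ : Z →L[ℝ] ℝ}
    (h : F.dualSupported s φ) {j : ℕ} (hj : j ∉ s) (z : Z) : φ (F.P j z) = 0 :=
  h.apply_eq_zero fun l hl => by rw [P_P, if_neg (ne_of_mem_of_not_mem hl hj)]

lemma dualSupported.exists_apply_P_dualMinSupp_ne_zero {s : Finset ℕ} {φ : Z →L[ℝ] ℝ}
    (h : F.dualSupported s φ) (hφ : φ ≠ 0) : ∃ y, φ (F.P (F.dualMinSupp φ) y) ≠ 0 := by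
  refine Nat.sInf_mem (s := {j | ∃ y, φ (F.P j y) ≠ 0}) ?_
  by_contra hempty
  refine hφ (ContinuousLinearMap.ext fun z => ?_)
  rw [h, proj_apply, map_sum, zero_apply]
  exact Finset.sum_eq_zero fun j _ => by_contra fun hj => hempty ⟨j, z, hj⟩

lemma dualSupported.dualMinSupp_mem {s : Finset ℕ} {φ : Z →L[ℝ] ℝ}
    (h : F.dualSupported s φ) (hφ : φ ≠ 0) : F.dualMinSupp φ ∈ s := by
  obtain ⟨y, hy⟩ := h.exists_apply_P_dualMinSupp_ne_zero hφ
  by_contra hs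
  exact hy (h.apply_P_eq_zero hs y)

lemma dualSupported.dualMinSupp_eq {a b : ℕ} {φ : Z →L[ℝ] ℝ}
    (h : F.dualSupported (Finset.Ico a b) φ) {y : Z} (hy : φ (F.P a y) ≠ 0) :
    F.dualMinSupp φ = a := by
  refine le_antisymm (Nat.sInf_le ⟨y, hy⟩) (le_csInf ⟨a, y, hy⟩ fun j ⟨y', hj⟩ => ?_)
  by_contra hja
  exact hj (h.apply_P_eq_zero (by simp only [Finset.mem_Ico]; omega) y')

lemma dualSupported.apply_proj_dualMinSupp {a b : ℕ} {φ : Z →L[ℝ] ℝ}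
    (h : F.dualSupported (Finset.Ico a b) φ) (z : Z) :
    φ (F.proj (Finset.Ico (F.dualMinSupp φ) b) z) = φ z := by
  rcases eq_or_ne φ 0 with rfl | hφ
  · simp
  have hm := Finset.mem_Ico.1 (h.dualMinSupp_mem hφ)
  rw [h z, proj_apply, proj_apply, map_sum, map_sum]
  refine Finset.sum_subset (Finset.Ico_subset_Ico hm.1 le_rfl) fun j hj hj' => ?_
  have hjm : j < F.dualMinSupp φ := by
    simp only [Finset.mem_Ico] at hj hj'
    omega
  by_contra hne
  exact Nat.notMem_of_lt_sInf hjm ⟨z, hne⟩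

lemma dualMinSupp_smul (φ : Z →L[ℝ] ℝ) {c : ℝ} (hc : c ≠ 0) :
    F.dualMinSupp (c • φ) = F.dualMinSupp φ := by
  simp [dualMinSupp, hc]

lemma dualSupported.exists_mem_E_apply_eq_one {s : Finset ℕ} {φ : Z →L[ℝ] ℝ}
    (h : F.dualSupported s φ) (hφ : φ ≠ 0) : ∃ e ∈ F.E (F.dualMinSupp φ), φ e = 1 := by
  obtain ⟨y, hy⟩ := h.exists_apply_P_dualMinSupp_ne_zero hφ
  exact ⟨(φ (F.P _ y))⁻¹ • F.P _ y, Submodule.smul_mem _ _ (F.mem_E _ y),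
    by rw [map_smul, smul_eq_mul, inv_mul_cancel₀ hy]⟩

/- Projecting a near-norming vector onto `[m, b)` keeps the value of `φ` and costs at most `B`
in norm; adding a small vector of `E m` on which `φ` is positive makes the coordinate `m`
nonzero. -/
lemma dualSupported.exists_block_near_norming {B : ℝ}
    (hB : ∀ a b, ‖F.proj (Finset.Ico a b)‖ ≤ B) {a b : ℕ} {φ : Z →L[ℝ] ℝ}
    (h : F.dualSupported (Finset.Ico a b) φ) (hφ : ‖φ‖ = 1) {ε : ℝ} (hε0 : 0 < ε)
    (hε1 : ε < 1) :
    ∃ z : Z, ‖z‖ = 1 ∧ F.supp z ⊆ Set.Ico (F.dualMinSupp φ) b ∧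
      F.minSupp z = F.dualMinSupp φ ∧ 1 - ε ≤ B * (1 + ε) * φ z := by
  set m := F.dualMinSupp φ
  have hB0 : 0 ≤ B := (norm_nonneg _).trans (hB 0 0)
  have hφ0 : φ ≠ 0 := by rintro rfl; simp at hφ
  have hmb : m ∈ Finset.Ico m b := by simpa using (Finset.mem_Ico.1 (h.dualMinSupp_mem hφ0)).2
  obtain ⟨y, hy1, hφy⟩ := φ.exists_norm_le_one_lt_apply (r := 1 - ε) (by linarith)
  obtain ⟨e, he, hφe⟩ := h.exists_mem_E_apply_eq_one hφ0
  have he0 : e ≠ 0 := by rintro rfl; simp at hφe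
  obtain ⟨s, hs0, hse, hPy⟩ : ∃ s : ℝ, 0 ≤ s ∧ s * ‖e‖ ≤ ε ∧ F.P m (y + s • e) ≠ 0 := by
    by_cases hPy : F.P m y = 0
    · refine ⟨ε / ‖e‖, by positivity, (div_mul_cancel₀ _ (norm_ne_zero_iff.2 he0)).le, ?_⟩
      rw [map_add, hPy, zero_add, map_smul, F.P_apply_of_mem he, if_pos rfl]
      exact smul_ne_zero (by positivity) he0
    · exact ⟨0, le_rfl, by simpa using hε0.le, by simpa using hPy⟩
  set y₂ := F.proj (Finset.Ico m b) (y + s • e)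
  have hPy₂ : F.P m y₂ ≠ 0 := by rwa [P_proj, if_pos hmb]
  have hy₂0 : y₂ ≠ 0 := fun h0 => hPy₂ (by rw [h0, map_zero])
  have hφy₂ : 1 - ε < φ y₂ := by
    rw [h.apply_proj_dualMinSupp, map_add, map_smul, hφe, smul_eq_mul]
    linarith
  have hny₂ : ‖y₂‖ ≤ B * (1 + ε) :=
    calc ‖y₂‖ ≤ B * ‖y + s • e‖ := (F.proj _).le_of_opNorm_le (hB m b) _
      _ ≤ B * (1 + ε) := by
        refine mul_le_mul_of_nonneg_left ((norm_add_le _ _).trans ?_) hB0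
        rw [norm_smul_of_nonneg hs0]
        linarith
  have hc : ‖y₂‖⁻¹ ≠ 0 := inv_ne_zero (norm_ne_zero_iff.2 hy₂0)
  have hsupp : F.supp (‖y₂‖⁻¹ • y₂) ⊆ Set.Ico m b := by
    rw [F.supp_smul hc]
    intro j hj
    simpa using F.supp_proj_subset _ _ hj
  refine ⟨‖y₂‖⁻¹ • y₂, norm_smul_inv_norm hy₂0, hsupp,
    F.minSupp_eq (by rw [map_smul]; exact smul_ne_zero hc hPy₂) fun j hj => (hsupp hj).1, ?_⟩
  rw [map_smul, smul_eq_mul]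
  calc 1 - ε ≤ φ y₂ := hφy₂.le
    _ = ‖y₂‖ * (‖y₂‖⁻¹ * φ y₂) := by field_simp
    _ ≤ B * (1 + ε) * (‖y₂‖⁻¹ * φ y₂) :=
        mul_le_mul_of_nonneg_right hny₂ (mul_nonneg (inv_nonneg.2 (norm_nonneg _)) (by linarith))

theorem UpperBlockC.dualLowerBlockC (hv : IsOneUnconditional v) (hw : IsBiorthDual v w)
    {B C : ℝ} (hB : ∀ a b, ‖F.proj (Finset.Ico a b)‖ ≤ B) (hC : 0 ≤ C)
    (hU : F.UpperBlockC v C) : F.DualLowerBlockC w (C * B) := by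
  rintro φ ⟨k, hk, hφk⟩ hφ1 a n
  have hB0 : 0 ≤ B := (norm_nonneg _).trans (hB 0 0)
  have hφ0 : ∀ i, φ i ≠ 0 := fun i h0 => by simpa [h0] using hφ1 i
  set m : ℕ → ℕ := fun i => F.dualMinSupp (φ i)
  have hmk : ∀ i, m i ∈ Finset.Ico (k i) (k (i + 1)) :=
    fun i => (hφk i).dualMinSupp_mem (hφ0 i)
  have hm : StrictMono m := strictMono_nat_of_lt_succ fun i =>
    (Finset.mem_Ico.1 (hmk i)).2.trans_le (Finset.mem_Ico.1 (hmk (i + 1))).1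
  refine ((hw.comp_strictMono hv hm) a n).2 ?_
  rintro _ ⟨c, hc, rfl⟩
  set Φ := ∑ i ∈ Finset.range n, a i • φ i
  refine (le_of_continuousAt_of_eventually_le
    (f := fun ε => C * (B * (1 + ε)) * ‖Φ‖ + ε * ∑ i ∈ Finset.range n, a i * c i) (a := 0)
    (by fun_prop) ?_).trans_eq (by simp)
  filter_upwards [Ioo_mem_nhdsGT one_pos] with ε ⟨hε0, hε1⟩
  choose z hz1 hzsupp hzmin hφz using
    fun i => (hφk i).exists_block_near_norming hB (hφ1 i) hε0 hε1
  have hzk : ∀ i, F.supp (z i) ⊆ Set.Ico (k i) (k (i + 1)) :=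
    fun i => (hzsupp i).trans (Set.Ico_subset_Ico (Finset.mem_Ico.1 (hmk i)).1 le_rfl)
  have hdom : DomBy (v ∘ m) z C := by
    have hUz := hU z ⟨k, hk, hzk⟩ hz1
    simp only [hzmin] at hUz
    exact hUz
  have hcross : ∀ i j, i ≠ j → φ i (z j) = 0 := fun i j hij =>
    (hφk i).apply_eq_zero fun l hl => by_contra fun hne =>
      Set.disjoint_left.1 (hk.monotone.pairwise_disjoint_on_Ico_succ hij)
        (by simpa using hl) (hzk j hne)
  have key := hdom.mul_sum_mul_le (hv.comp_strictMono hm) hC hcross (by linarith : 0 < 1 - ε)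
    (by positivity) hφz a c n
  have : C * (B * (1 + ε)) * ‖∑ i ∈ Finset.range n, c i • (v ∘ m) i‖ * ‖Φ‖ ≤
      C * (B * (1 + ε)) * 1 * ‖Φ‖ := by gcongr
  linarith

lemma DualLowerBlockC.norm_sum_le {C : ℝ} (hL : F.DualLowerBlockC w C) {φ : ℕ → Z →L[ℝ] ℝ}
    (hφ : F.IsDualBlockSeq φ) (hφ0 : ∀ i, φ i ≠ 0) (a : ℕ → ℝ) (n : ℕ) :
    ‖∑ i ∈ Finset.range n, (a i * ‖φ i‖) • w (F.dualMinSupp (φ i))‖ ≤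
      C * ‖∑ i ∈ Finset.range n, a i • φ i‖ := by
  obtain ⟨k, hk, hφk⟩ := hφ
  have hL' := hL (fun i => ‖φ i‖⁻¹ • φ i) ⟨k, hk, fun i => (hφk i).smul _⟩
    (fun i => norm_smul_inv_norm (hφ0 i)) (fun i => a i * ‖φ i‖) n
  simpa [smul_smul, mul_assoc, dualMinSupp_smul, hφ0] using hL'

variable (F) in
def perturbedRestriction (g h : Z →L[ℝ] ℝ) (δ : ℝ) (p q : ℕ) : Z →L[ℝ] ℝ :=
  g.comp (F.proj (Finset.Ico p q)) + δ • h.comp (F.P p)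

lemma dualSupported_perturbedRestriction (g h : Z →L[ℝ] ℝ) (δ : ℝ) {p q : ℕ} (hpq : p < q) :
    F.dualSupported (Finset.Ico p q) (F.perturbedRestriction g h δ p q) := fun z => by
  simp [perturbedRestriction, proj_proj_self, P_proj, hpq]

lemma perturbedRestriction_apply_of_supp_subset (g h : Z →L[ℝ] ℝ) (δ : ℝ) {p q : ℕ} {z : Z}
    (hz : F.supp z ⊆ Set.Ico p q) :
    F.perturbedRestriction g h δ p q z = g z + δ * h (F.P p z) := by
  simp [perturbedRestriction, F.proj_eq_self (s := Finset.Ico p q) (by simpa using hz)]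

lemma perturbedRestriction_apply_P (g h : Z →L[ℝ] ℝ) (δ : ℝ) {p q : ℕ} (hpq : p < q) (z : Z) :
    F.perturbedRestriction g h δ p q (F.P p z) = g (F.P p z) + δ * h (F.P p z) := by
  rw [perturbedRestriction_apply_of_supp_subset _ _ _
      ((F.supp_P_subset p z).trans (by simpa using hpq)), P_P, if_pos rfl]

lemma norm_sum_perturbedRestriction_le {B : ℝ} (hB : ∀ a b, ‖F.proj (Finset.Ico a b)‖ ≤ B)
    (g : Z →L[ℝ] ℝ) {h : ℕ → Z →L[ℝ] ℝ} (hh : ∀ i, ‖h i‖ ≤ 1) {δ : ℝ} (hδ : 0 ≤ δ)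
    {m : ℕ → ℕ} (hm : Monotone m) (n : ℕ) :
    ‖∑ i ∈ Finset.range n, F.perturbedRestriction g (h i) δ (m i) (m (i + 1))‖ ≤
      ‖g‖ * B + n * δ * B := by
  simp only [perturbedRestriction, Finset.sum_add_distrib, ← ContinuousLinearMap.comp_finsetSum,
    F.sum_proj_Ico_consecutive hm]
  refine (norm_add_le _ _).trans (add_le_add ?_ ((norm_sum_le _ _).trans ?_))
  · exact (ContinuousLinearMap.opNorm_comp_le _ _).trans
      (mul_le_mul_of_nonneg_left (hB _ _) (norm_nonneg _))
  · have hterm : ∀ i, ‖δ • (h i).comp (F.P (m i))‖ ≤ δ * B := fun i => by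
      rw [norm_smul, Real.norm_of_nonneg hδ]
      refine mul_le_mul_of_nonneg_left ((ContinuousLinearMap.opNorm_comp_le _ _).trans ?_) hδ
      exact (mul_le_mul (hh i) (norm_P_le hB _) (norm_nonneg _) zero_le_one).trans_eq (one_mul B)
    refine (Finset.sum_le_sum fun i _ => hterm i).trans_eq ?_
    rw [Finset.sum_const, Finset.card_range, nsmul_eq_mul, mul_assoc]

lemma abs_apply_le_norm_perturbedRestriction_add {B : ℝ}
    (hB : ∀ a b, ‖F.proj (Finset.Ico a b)‖ ≤ B) (g : Z →L[ℝ] ℝ) {h : Z →L[ℝ] ℝ} (hh : ‖h‖ ≤ 1)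
    {δ : ℝ} (hδ : 0 ≤ δ) {p q : ℕ} {z : Z} (hz : F.supp z ⊆ Set.Ico p q) (hz1 : ‖z‖ = 1) :
    |g z| ≤ ‖F.perturbedRestriction g h δ p q‖ + δ * B := by
  have hφz := perturbedRestriction_apply_of_supp_subset g h δ hz
  have h1 : |F.perturbedRestriction g h δ p q z| ≤ ‖F.perturbedRestriction g h δ p q‖ := by
    simpa [hz1] using (F.perturbedRestriction g h δ p q).le_opNorm z
  have h2 : |h (F.P p z)| ≤ B :=
    calc |h (F.P p z)| ≤ ‖h‖ * ‖F.P p z‖ := h.le_opNorm _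
      _ ≤ 1 * (B * ‖z‖) := mul_le_mul hh ((F.P p).le_of_opNorm_le (norm_P_le hB p) z)
          (norm_nonneg _) zero_le_one
      _ = B := by rw [hz1]; ring
  rw [show g z = F.perturbedRestriction g h δ p q z - δ * h (F.P p z) by rw [hφz]; ring]
  refine (abs_sub _ _).trans (add_le_add h1 ?_)
  rw [abs_mul, abs_of_nonneg hδ]
  exact mul_le_mul_of_nonneg_left h2 hδ

lemma exists_perturbed_dualBlockSeq {B : ℝ} (hB : ∀ a b, ‖F.proj (Finset.Ico a b)‖ ≤ B)
    {z : ℕ → Z} {m : ℕ → ℕ} (hm : StrictMono m) (hz1 : ∀ i, ‖z i‖ = 1)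
    (hzm : ∀ i, F.supp (z i) ⊆ Set.Ico (m i) (m (i + 1))) (hPm : ∀ i, F.P (m i) (z i) ≠ 0)
    {g : Z →L[ℝ] ℝ} (hg : ‖g‖ ≤ 1) {δ : ℝ} (hδ : 0 < δ) :
    ∃ φ : ℕ → Z →L[ℝ] ℝ, F.IsDualBlockSeq φ ∧
      (∀ i, φ i ≠ 0 ∧ F.dualMinSupp (φ i) = m i ∧ |g (z i)| ≤ ‖φ i‖ + δ * B) ∧
      ∀ n : ℕ, ‖∑ i ∈ Finset.range n, φ i‖ ≤ B + n * δ * B := by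
  have hB0 : 0 ≤ B := (norm_nonneg _).trans (hB 0 0)
  -- `h i` has the sign of `g` at `P (m i) (z i)`, so the perturbation cannot cancel `g` there.
  choose h hh1 hh0 hhg using
    fun i => exists_norm_le_one_apply_ne_zero_mul_nonneg (hPm i) (g (F.P (m i) (z i)))
  have hφP : ∀ i, F.perturbedRestriction g (h i) δ (m i) (m (i + 1)) (F.P (m i) (z i)) ≠ 0 :=
    fun i => by
      rw [perturbedRestriction_apply_P _ _ _ (hm (lt_add_one i))]
      intro h0
      nlinarith [hhg i, mul_pos hδ (sq_pos_of_ne_zero (hh0 i)),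
        congrArg (· * h i (F.P (m i) (z i))) h0]
  have hsupp i := dualSupported_perturbedRestriction (F := F) g (h i) δ (hm (lt_add_one i))
  refine ⟨fun i => F.perturbedRestriction g (h i) δ (m i) (m (i + 1)), ⟨m, hm, hsupp⟩,
    fun i => ⟨fun h0 => hφP i (by simp only [h0, zero_apply]), (hsupp i).dualMinSupp_eq (hφP i),
      abs_apply_le_norm_perturbedRestriction_add hB g (hh1 i) hδ.le (hzm i) (hz1 i)⟩,
    fun n => (norm_sum_perturbedRestriction_le hB g hh1 hδ.le hm.monotone n).trans ?_⟩
  gcongr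
  exact (mul_le_mul_of_nonneg_right hg hB0).trans_eq (one_mul B)

theorem DualLowerBlockC.upperBlockC (hv : IsOneUnconditional v) (hw : IsBiorthDual v w)
    {B C : ℝ} (hB : ∀ a b, ‖F.proj (Finset.Ico a b)‖ ≤ B) (hC : 0 ≤ C)
    (hL : F.DualLowerBlockC w C) : F.UpperBlockC v (C * B) := by
  rintro z ⟨k, hk, hzk⟩ hz1 a n
  have hz0 : ∀ i, z i ≠ 0 := fun i h0 => by simpa [h0] using hz1 i
  set m : ℕ → ℕ := fun i => F.minSupp (z i)
  have hPm : ∀ i, F.P (m i) (z i) ≠ 0 := fun i => F.P_minSupp_ne_zero (hz0 i)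
  have hmk : ∀ i, m i ∈ Set.Ico (k i) (k (i + 1)) := fun i => hzk i (hPm i)
  have hm : StrictMono m := strictMono_nat_of_lt_succ fun i => (hmk i).2.trans_le (hmk (i + 1)).1
  have hzm : ∀ i, F.supp (z i) ⊆ Set.Ico (m i) (m (i + 1)) :=
    fun i j hj => ⟨F.minSupp_le hj, (hzk i hj).2.trans_le (hmk (i + 1)).1⟩
  obtain ⟨g, hg1, hgx⟩ := exists_dual_vector'' ℝ (∑ i ∈ Finset.range n, a i • z i)
  rw [RCLike.ofReal_real_eq_id, id] at hgx
  rw [← hgx]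
  set A := ‖∑ i ∈ Finset.range n, a i • v (m i)‖
  refine (le_of_continuousAt_of_eventually_le
    (f := fun δ => C * (B + n * δ * B) * A + δ * (B * ∑ i ∈ Finset.range n, |a i|)) (a := 0)
    (by fun_prop) ?_).trans_eq (by simp)
  filter_upwards [self_mem_nhdsWithin] with δ (hδ : 0 < δ)
  obtain ⟨φ, hφblock, hφ, hsum⟩ := exists_perturbed_dualBlockSeq hB hm hz1 hzm hPm hg1 hδ
  choose hφ0 hφmin hgz using hφ
  have hlower := hL.norm_sum_le hφblock hφ0 (fun _ => 1) n
  simp only [one_mul, one_smul, hφmin] at hlower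
  have hpair := (hw.comp_strictMono hv hm).sum_abs_mul_le (hv.comp_strictMono hm) a (‖φ ·‖) n
  calc g (∑ i ∈ Finset.range n, a i • z i) = ∑ i ∈ Finset.range n, a i * g (z i) := by
        simp [map_sum]
    _ ≤ ∑ i ∈ Finset.range n, (|a i| * ‖φ i‖ + δ * B * |a i|) :=
        Finset.sum_le_sum fun i _ => (le_abs_self _).trans <| by
          rw [abs_mul]
          nlinarith [hgz i, abs_nonneg (a i)]
    _ = ∑ i ∈ Finset.range n, |a i| * ‖φ i‖ + δ * (B * ∑ i ∈ Finset.range n, |a i|) := by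
        rw [Finset.sum_add_distrib, Finset.mul_sum, Finset.mul_sum]
        simp only [mul_assoc]
    _ ≤ A * (C * (B + n * δ * B)) + δ * (B * ∑ i ∈ Finset.range n, |a i|) := by
        gcongr
        exact hpair.trans (mul_le_mul_of_nonneg_left
          (hlower.trans (mul_le_mul_of_nonneg_left (hsum n) hC)) (norm_nonneg _))
    _ = C * (B + n * δ * B) * A + δ * (B * ∑ i ∈ Finset.range n, |a i|) := by ring

end FDD

theorem upper_block_iff_dual_lower_block_general
    {Z : Type*} [NormedAddCommGroup Z] [NormedSpace ℝ Z] [CompleteSpace Z]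
    {V : Type*} [NormedAddCommGroup V] [NormedSpace ℝ V]
    {W : Type*} [NormedAddCommGroup W] [NormedSpace ℝ W]
    (F : FDD Z) (v : ℕ → V) (w : ℕ → W)
    (hvuncond : IsOneUnconditional v)
    (hw : IsBiorthDual v w) :
    (F.UpperBlock v ↔ F.DualLowerBlock w) ∧
    (F.Bimonotone → ∀ C : ℝ, 1 ≤ C → (F.UpperBlockC v C ↔ F.DualLowerBlockC w C)) := by
  obtain ⟨B, hB1, hB⟩ := F.exists_norm_proj_Ico_le
  refine ⟨⟨fun ⟨C, hC, hU⟩ => ⟨C * B, one_le_mul_of_one_le_of_one_le hC hB1,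
      hU.dualLowerBlockC hvuncond hw hB (by linarith)⟩,
    fun ⟨C, hC, hL⟩ => ⟨C * B, one_le_mul_of_one_le_of_one_le hC hB1,
      hL.upperBlockC hvuncond hw hB (by linarith)⟩⟩, fun hF C hC => ?_⟩
  have hB1 := hF.norm_proj_Ico_le_one
  exact ⟨fun hU => mul_one C ▸ hU.dualLowerBlockC hvuncond hw hB1 (by linarith),
    fun hL => mul_one C ▸ hL.upperBlockC hvuncond hw hB1 (by linarith)⟩

/-- Proposition 2.2 (= [OSZ2, Proposition 2.14]): duality between subsequential `V`
upper block estimates in `Z` and subsequential `V^*` lower block estimates in `Z^(*)`. -/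
theorem upper_block_iff_dual_lower_block
    {Z : Type*} [NormedAddCommGroup Z] [NormedSpace ℝ Z] [CompleteSpace Z]
    {V : Type*} [NormedAddCommGroup V] [NormedSpace ℝ V] [CompleteSpace V]
    {W : Type*} [NormedAddCommGroup W] [NormedSpace ℝ W] [CompleteSpace W]
    (F : FDD Z) (v : ℕ → V) (w : ℕ → W)
    (hvnorm : IsNormalized v) (hvuncond : IsOneUnconditional v)
    (hvbasic : IsBasicSeq v) (hw : IsBiorthDual v w) :
    (F.UpperBlock v ↔ F.DualLowerBlock w) ∧
    (F.Bimonotone → ∀ C : ℝ, 1 ≤ C → (F.UpperBlockC v C ↔ F.DualLowerBlockC w C)) :=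
  upper_block_iff_dual_lower_block_general F v w hvuncond hw
end
end

section
/- Let X be a Banach space with separable dual, and let V = (v_i) be a normalized, 1-unconditional, right dominant basic sequence. If X satisfies subsequential V upper tree estimates, then X* satisfies subsequential V* lower w* tree estimates, where V* = (v_i*) is the sequence of biorthogonal functionals of V. -/
open Filter Topology Set

noncomputable section

/-!
Prune the `w*`-null even tree `(f s)` to a weakly null even tree `(y s)` in `X` such that along
every branch the functional at each node is `≥ 1/4` at the vector of the corresponding node and
nearly vanishes at the vectors of the other nodes. At a child of an odd node, `y` is a normalized difference
`x p - x q` of norming vectors of the children of `f`: `f p (x q)` is small by `w*`-nullness, and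
`x p - x q` is small against finitely many earlier functionals by compactness in finitely many
coordinates. Adding the first terms of a dense sequence in the separable `X*` to those
functionals makes `(y s)` weakly null.

The upper `V` estimate on a branch of `(y s)`, moved by right dominance to the indices of the
corresponding branch of `(f s)`, bounds `z = ∑ (b j / f j (y j)) • y j` by a multiple of
`‖∑ b j • v j‖`, while `(∑ a l • f l) z` is `∑ a l * b l` up to small errors. Taking the supremum
over `b` gives `‖∑ a l • v* l‖ ≲ ‖∑ a l • f l‖`.
-/

open Finset

section Unconditional

variable {E : Type*} [NormedAddCommGroup E] [NormedSpace ℝ E] {v : ℕ → E}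

lemma norm_add_smul_le_of_abs_le (A u : E) {s r : ℝ} (h : |s| ≤ |r|)
    (hsymm : ‖A - r • u‖ = ‖A + r • u‖) : ‖A + s • u‖ ≤ ‖A + r • u‖ := by
  have hconv : ConvexOn ℝ univ (fun t : ℝ => ‖A + t • u‖) := by
    simpa [Function.comp_def, AffineMap.lineMap_apply, add_comm] using
      (convexOn_norm convex_univ).comp_affineMap (AffineMap.lineMap (k := ℝ) A (A + u))
  have hs : s ∈ segment ℝ (-r) r := by
    rw [segment_eq_uIcc, Set.mem_uIcc]
    rcases le_total 0 r with hr | hr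
    · have := abs_le.1 (h.trans_eq (abs_of_nonneg hr)); left; constructor <;> linarith
    · have := abs_le.1 (h.trans_eq (abs_of_nonpos hr)); right; constructor <;> linarith
  calc ‖A + s • u‖ ≤ max ‖A + (-r) • u‖ ‖A + r • u‖ :=
        hconv.le_on_segment (mem_univ _) (mem_univ _) hs
    _ = ‖A + r • u‖ := by rw [neg_smul, ← sub_eq_add_neg, hsymm, max_self]

lemma sum_update_smul {s : Finset ℕ} {j : ℕ} (hj : j ∈ s) (b : ℕ → ℝ) (t : ℝ) :
    ∑ i ∈ s, Function.update b j t i • v i = ∑ i ∈ s, b i • v i + (t - b j) • v j := by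
  rw [← add_sum_erase _ _ hj, ← add_sum_erase _ _ hj, Function.update_self,
    sum_congr rfl fun i hi => by rw [Function.update_of_ne (ne_of_mem_erase hi)]]
  module

namespace IsOneUnconditional

lemma norm_sum_update_le_s9 (hv : IsOneUnconditional v) (b : ℕ → ℝ) (j : ℕ) {t : ℝ}
    (ht : |t| ≤ |b j|) (M : ℕ) :
    ‖∑ i ∈ range M, Function.update b j t i • v i‖ ≤ ‖∑ i ∈ range M, b i • v i‖ := by
  by_cases hj : j ∈ range M
  swap
  · exact le_of_eq <| congrArg norm <| sum_congr rfl fun i hi => by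
      rw [Function.update_of_ne (ne_of_mem_of_not_mem hi hj)]
  set A := ∑ i ∈ range M, b i • v i - b j • v j
  have hsum : ∀ t, ∑ i ∈ range M, Function.update b j t i • v i = A + t • v j := fun t => by
    rw [sum_update_smul hj]; module
  have hb : ∑ i ∈ range M, b i • v i = A + b j • v j := (sub_add_cancel _ _).symm
  have hflip : ‖A - b j • v j‖ = ‖A + b j • v j‖ := by
    have := hv b (Function.update 1 j (-1)) (fun i => by
      rcases eq_or_ne i j with rfl | hi <;> simp [*]) M
    rw [← hb, ← this, sub_eq_add_neg, ← neg_smul, ← hsum]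
    congr 2 with i
    rcases eq_or_ne i j with rfl | hi <;> simp [*]
  rw [hsum, hb]
  exact norm_add_smul_le_of_abs_le A (v j) ht hflip

lemma norm_sum_le_of_abs_le_s9 (hv : IsOneUnconditional v) {b c : ℕ → ℝ} (M : ℕ)
    (h : ∀ i ∈ range M, |c i| ≤ |b i|) :
    ‖∑ i ∈ range M, c i • v i‖ ≤ ‖∑ i ∈ range M, b i • v i‖ := by
  classical
  have key : ∀ S ⊆ range M,
      ‖∑ i ∈ range M, S.piecewise c b i • v i‖ ≤ ‖∑ i ∈ range M, b i • v i‖ := by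
    intro S
    induction S using Finset.induction_on with
    | empty => simp
    | insert j S hjS ih =>
      intro hS
      rw [Finset.piecewise_insert]
      refine (hv.norm_sum_update_le_s9 _ j ?_ M).trans (ih ((Finset.subset_insert j S).trans hS))
      rw [Finset.piecewise_eq_of_notMem _ _ _ hjS]
      exact h j (hS (mem_insert_self j S))
  have := key _ subset_rfl
  rwa [sum_congr rfl fun i hi => by rw [Finset.piecewise_eq_of_mem _ _ _ hi]] at this

lemma abs_le_norm_sum (hv : IsOneUnconditional v) (hvn : IsNormalized v) (b : ℕ → ℝ)
    {M j : ℕ} (hj : j < M) : |b j| ≤ ‖∑ i ∈ range M, b i • v i‖ := by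
  have := hv.norm_sum_le_of_abs_le_s9 (c := Pi.single j (b j)) (b := b) M fun i _ => by
    rcases eq_or_ne i j with rfl | hi <;> simp [*]
  simpa [Pi.single_apply, sum_ite_eq', hj, norm_smul, hvn j] using this

end IsOneUnconditional

end Unconditional

section Subsequence

variable {E : Type*} [NormedAddCommGroup E] [NormedSpace ℝ E] {v : ℕ → E} {m : ℕ → ℕ}

lemma sum_range_extend_smul {M : Type*} [AddCommMonoid M] [Module ℝ M] (hm : StrictMono m)
    (a : ℕ → ℝ) (x : ℕ → M) (N : ℕ) :
    ∑ i ∈ range (m N), Function.extend m a 0 i • x i = ∑ l ∈ range N, a l • x (m l) := by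
  classical
  have hsub : (range N).image m ⊆ range (m N) := fun i hi => by
    obtain ⟨l, hl, rfl⟩ := Finset.mem_image.1 hi
    exact Finset.mem_range.2 (hm (Finset.mem_range.1 hl))
  rw [← sum_subset hsub, sum_image fun _ _ _ _ h => hm.injective h]
  · simp only [hm.injective.extend_apply]
  · intro i hi hni
    rw [Function.extend_apply' _ _ _ ?_, Pi.zero_apply, zero_smul]
    rintro ⟨l, rfl⟩
    exact hni (Finset.mem_image_of_mem m
      (Finset.mem_range.2 (hm.lt_iff_lt.1 (Finset.mem_range.1 hi))))

lemma abs_extend_le (hm : StrictMono m) {a b : ℕ → ℝ} (h : ∀ l, |a l| ≤ |b l|) (i : ℕ) :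
    |Function.extend m a 0 i| ≤ |Function.extend m b 0 i| := by
  by_cases hi : ∃ l, m l = i
  · obtain ⟨l, rfl⟩ := hi
    simpa only [hm.injective.extend_apply] using h l
  · simp [Function.extend_apply' _ _ _ hi]

namespace IsOneUnconditional

lemma norm_sum_comp_le_of_abs_le (hv : IsOneUnconditional v) (hm : StrictMono m) {b c : ℕ → ℝ}
    (N : ℕ) (h : ∀ l, |c l| ≤ |b l|) :
    ‖∑ l ∈ range N, c l • v (m l)‖ ≤ ‖∑ l ∈ range N, b l • v (m l)‖ := by
  rw [← sum_range_extend_smul hm, ← sum_range_extend_smul hm]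
  exact hv.norm_sum_le_of_abs_le_s9 _ fun i _ => abs_extend_le hm h i

lemma norm_sum_comp_le (hv : IsOneUnconditional v) (hm : StrictMono m) (b : ℕ → ℝ) (N : ℕ) :
    ‖∑ l ∈ range N, b (m l) • v (m l)‖ ≤ ‖∑ i ∈ range (m N), b i • v i‖ := by
  rw [← sum_range_extend_smul hm fun l => b (m l)]
  refine hv.norm_sum_le_of_abs_le_s9 _ fun i _ => ?_
  by_cases hi : ∃ l, m l = i
  · obtain ⟨l, rfl⟩ := hi
    rw [hm.injective.extend_apply]
  · simp [Function.extend_apply' _ _ _ hi]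

end IsOneUnconditional

end Subsequence

namespace IsBiorthDual

variable {E : Type*} [NormedAddCommGroup E] [NormedSpace ℝ E] {v : ℕ → E}
variable {F : Type*} [NormedAddCommGroup F] [NormedSpace ℝ F] {w : ℕ → F}

lemma norm_sum_le (hw : IsBiorthDual v w) {a : ℕ → ℝ} {M : ℕ} {K : ℝ}
    (h : ∀ b : ℕ → ℝ, ‖∑ i ∈ range M, b i • v i‖ ≤ 1 → ∑ i ∈ range M, a i * b i ≤ K) :
    ‖∑ i ∈ range M, a i • w i‖ ≤ K :=
  (hw a M).2 fun _ ⟨b, hb, hr⟩ => hr ▸ h b hb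

lemma abs_le_norm_sum (hw : IsBiorthDual v w) (hvn : IsNormalized v) (a : ℕ → ℝ) {M j : ℕ}
    (hj : j < M) : |a j| ≤ ‖∑ i ∈ range M, a i • w i‖ := by
  have hmem : ∀ σ : ℝ, |σ| = 1 → a j * σ ≤ ‖∑ i ∈ range M, a i • w i‖ := fun σ hσ =>
    (hw a M).1 ⟨Pi.single j σ, by simp [Pi.single_apply, hj, norm_smul, hσ, hvn j],
      by simp [Pi.single_apply, hj]⟩
  have h₁ := hmem 1 (by simp)
  have h₂ := hmem (-1) (by simp)
  rw [abs_le]; constructor <;> linarith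

variable {n : ℕ → ℕ}

lemma norm_sum_comp_le (hw : IsBiorthDual v w) (hn : StrictMono n) {a : ℕ → ℝ} {N : ℕ} {K : ℝ}
    (h : ∀ b : ℕ → ℝ, ‖∑ i ∈ range (n N), b i • v i‖ ≤ 1 → ∑ l ∈ range N, a l * b (n l) ≤ K) :
    ‖∑ l ∈ range N, a l • w (n l)‖ ≤ K := by
  rw [← sum_range_extend_smul hn]
  refine hw.norm_sum_le fun b hb => ?_
  simpa only [smul_eq_mul] using (sum_range_extend_smul hn a b N).trans_le (h b hb)

lemma abs_le_norm_sum_comp (hw : IsBiorthDual v w) (hvn : IsNormalized v) (hn : StrictMono n)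
    (a : ℕ → ℝ) {N l : ℕ} (hl : l < N) : |a l| ≤ ‖∑ l ∈ range N, a l • w (n l)‖ := by
  rw [← sum_range_extend_smul hn, ← hn.injective.extend_apply a 0 l]
  exact hw.abs_le_norm_sum hvn _ (hn hl)

end IsBiorthDual

section Domination

variable {E : Type*} [NormedAddCommGroup E] [NormedSpace ℝ E]
variable {F : Type*} [NormedAddCommGroup F] [NormedSpace ℝ F]
variable {X : Type*} [NormedAddCommGroup X] [NormedSpace ℝ X]

lemma DomBy.trans {u : ℕ → E} {x : ℕ → X} {u' : ℕ → F} {C D : ℝ} (hux : DomBy u x C)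
    (hu'u : DomBy u' u D) (hC : 0 ≤ C) : DomBy u' x (C * D) := fun a N =>
  (hux a N).trans <| by rw [mul_assoc]; exact mul_le_mul_of_nonneg_left (hu'u a N) hC

lemma abs_sum_mul_sum_erase_le {a c : ℕ → ℝ} {M : ℕ → ℕ → ℝ} {A B : ℝ} (N : ℕ) (hA : 0 ≤ A)
    (hB : 0 ≤ B) (ha : ∀ l ∈ range N, |a l| ≤ A) (hc : ∀ j ∈ range N, |c j| ≤ B)
    (hM : ∀ l j, l ≠ j → |M l j| ≤ (1 / 2) ^ (l + j) / 64) :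
    |∑ l ∈ range N, a l * ∑ j ∈ (range N).erase l, c j * M l j| ≤ A * B / 16 := by
  have hgeom := sum_geometric_two_le N
  have hrow : ∀ l ∈ range N, |a l * ∑ j ∈ (range N).erase l, c j * M l j|
      ≤ A * B / 64 * (1 / 2) ^ l * ∑ j ∈ range N, (1 / 2 : ℝ) ^ j := by
    intro l hl
    rw [abs_mul]
    refine (mul_le_mul (ha l hl) (abs_sum_le_sum_abs _ _) (abs_nonneg _) hA).trans ?_
    rw [mul_sum, mul_sum]
    refine (sum_le_sum fun j hj => ?_).trans
      (sum_le_sum_of_subset_of_nonneg (erase_subset l _) fun j _ _ => by positivity)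
    rw [abs_mul]
    have := mul_le_mul (hc j (mem_of_mem_erase hj)) (hM l j (ne_of_mem_erase hj).symm)
      (abs_nonneg _) hB
    calc A * (|c j| * |M l j|) ≤ A * (B * ((1 / 2) ^ (l + j) / 64)) := by gcongr
      _ = A * B / 64 * (1 / 2) ^ l * (1 / 2) ^ j := by ring
  calc |∑ l ∈ range N, a l * ∑ j ∈ (range N).erase l, c j * M l j|
      ≤ ∑ l ∈ range N, A * B / 64 * (1 / 2) ^ l * ∑ j ∈ range N, (1 / 2 : ℝ) ^ j :=
        (abs_sum_le_sum_abs _ _).trans (sum_le_sum hrow)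
    _ = A * B / 64 * (∑ l ∈ range N, (1 / 2 : ℝ) ^ l) * ∑ j ∈ range N, (1 / 2 : ℝ) ^ j := by
        rw [← sum_mul, ← mul_sum]
    _ ≤ A * B / 64 * 2 * 2 := by gcongr
    _ = A * B / 16 := by ring

end Domination

section Duality

variable {E : Type*} [NormedAddCommGroup E] [NormedSpace ℝ E] {v : ℕ → E}
variable {F : Type*} [NormedAddCommGroup F] [NormedSpace ℝ F] {w : ℕ → F}
variable {X : Type*} [NormedAddCommGroup X] [NormedSpace ℝ X]

lemma sum_smul_apply_sum_smul (Φ : ℕ → X →L[ℝ] ℝ) (y : ℕ → X) (a c : ℕ → ℝ) (N : ℕ) :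
    (∑ l ∈ range N, a l • Φ l) (∑ j ∈ range N, c j • y j) =
      ∑ l ∈ range N, a l * (c l * Φ l (y l)) +
        ∑ l ∈ range N, a l * ∑ j ∈ (range N).erase l, c j * Φ l (y j) := by
  have hΦ : ∀ l, Φ l (∑ j ∈ range N, c j • y j) = ∑ j ∈ range N, c j * Φ l (y j) := fun l => by
    simp only [map_sum, map_smul, smul_eq_mul]
  simp only [FunLike.coe_sum, Finset.sum_apply, FunLike.coe_smul, Pi.smul_apply, smul_eq_mul, hΦ,
    ← sum_add_distrib, ← mul_add]
  exact sum_congr rfl fun l hl => by rw [← add_sum_erase _ _ hl]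

theorem IsBiorthDual.domBy_of_almostBiorthogonal (hw : IsBiorthDual v w) (hvn : IsNormalized v)
    (hv : IsOneUnconditional v) {n : ℕ → ℕ} (hn : StrictMono n) {Φ : ℕ → X →L[ℝ] ℝ}
    {y : ℕ → X} {C : ℝ} (hC : 0 ≤ C) (hdom : DomBy (fun j => v (n j)) y C)
    (hdiag : ∀ j, 1 / 4 ≤ Φ j (y j))
    (hoff : ∀ l j, l ≠ j → |Φ l (y j)| ≤ (1 / 2) ^ (l + j) / 64) :
    DomBy Φ (fun l => w (n l)) (6 * C) := by
  intro a N
  set S := ‖∑ l ∈ range N, a l • w (n l)‖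
  set R := ‖∑ l ∈ range N, a l • Φ l‖
  suffices S ≤ 4 * C * R + S / 4 by
    nlinarith [mul_nonneg hC (norm_nonneg (∑ l ∈ range N, a l • Φ l))]
  refine hw.norm_sum_comp_le hn fun b hb => ?_
  have hΦpos : ∀ j, 0 < Φ j (y j) := fun j => by linarith [hdiag j]
  set c : ℕ → ℝ := fun j => b (n j) / Φ j (y j)
  have hc : ∀ j, |c j| ≤ |4 * b (n j)| := fun j => by
    rw [abs_div, abs_of_pos (hΦpos j), div_le_iff₀ (hΦpos j), abs_mul,
      abs_of_pos (four_pos : (0 : ℝ) < 4)]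
    nlinarith [hdiag j, abs_nonneg (b (n j))]
  have hz : ‖∑ j ∈ range N, c j • y j‖ ≤ 4 * C := calc
    _ ≤ C * ‖∑ j ∈ range N, c j • v (n j)‖ := hdom c N
    _ ≤ C * ‖∑ j ∈ range N, (4 * b (n j)) • v (n j)‖ :=
        mul_le_mul_of_nonneg_left (hv.norm_sum_comp_le_of_abs_le hn N hc) hC
    _ = 4 * C * ‖∑ j ∈ range N, b (n j) • v (n j)‖ := by
        simp only [mul_smul, ← smul_sum, norm_smul]; norm_num; ring
    _ ≤ 4 * C * 1 := by
        gcongr; exact (hv.norm_sum_comp_le hn b N).trans hb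
    _ = 4 * C := mul_one _
  have hpair : (∑ l ∈ range N, a l • Φ l) (∑ j ∈ range N, c j • y j) ≤ R * (4 * C) :=
    (le_abs_self _).trans <| ((∑ l ∈ range N, a l • Φ l).le_opNorm _).trans <|
      mul_le_mul_of_nonneg_left hz (norm_nonneg _)
  rw [sum_smul_apply_sum_smul,
    sum_congr rfl fun l _ => by rw [div_mul_cancel₀ _ (hΦpos l).ne']] at hpair
  have herr := abs_sum_mul_sum_erase_le N (norm_nonneg _) zero_le_four
    (fun l hl => hw.abs_le_norm_sum_comp hvn hn a (mem_range.1 hl))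
    (fun j hj => (hc j).trans <| by
      rw [abs_mul, abs_of_pos (four_pos : (0 : ℝ) < 4)]
      linarith [(hv.abs_le_norm_sum hvn b (hn (mem_range.1 hj))).trans hb]) hoff
  linarith [abs_le.1 herr]

end Duality

section Functionals

variable {X : Type*} [NormedAddCommGroup X] [NormedSpace ℝ X]

lemma exists_norm_eq_one_lt_apply (φ : X →L[ℝ] ℝ) {r : ℝ} (hr₀ : 0 ≤ r) (hr : r < ‖φ‖) :
    ∃ u : X, ‖u‖ = 1 ∧ r < φ u := by
  obtain ⟨x, hx₁, hx⟩ := φ.exists_lt_apply_of_lt_opNorm hr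
  obtain ⟨x, hx₁, hx⟩ : ∃ x : X, ‖x‖ < 1 ∧ r < φ x := by
    rcases le_total 0 (φ x) with h | h
    · exact ⟨x, hx₁, by rwa [Real.norm_of_nonneg h] at hx⟩
    · exact ⟨-x, by rwa [norm_neg], by rwa [Real.norm_of_nonpos h, ← map_neg] at hx⟩
  have hx₀ : 0 < ‖x‖ := norm_pos_iff.2 fun h => by simp [h] at hx; linarith
  refine ⟨‖x‖⁻¹ • x, by rw [norm_smul, norm_inv, norm_norm, inv_mul_cancel₀ hx₀.ne'], ?_⟩
  rw [map_smul, smul_eq_mul, inv_mul_eq_div]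
  exact hx.trans_le (le_div_self (hr₀.trans hx.le) hx₀ hx₁.le)

lemma exists_separated_pair {x : ℕ → X} {g : ℕ → X →L[ℝ] ℝ} (hx : ∀ j, ‖x j‖ ≤ 1)
    (hgx : ∀ᶠ j in atTop, 3 / 4 ≤ g j (x j)) (hg : ∀ u, Tendsto (fun j => g j u) atTop (𝓝 0))
    (Φ : Finset (X →L[ℝ] ℝ)) (U : Finset X) {ε : ℝ} (hε : 0 < ε) (m : ℕ) :
    ∃ p ≥ m, ∃ q, 1 / 2 ≤ g p (x p - x q) ∧ (∀ φ ∈ Φ, |φ (x p - x q)| ≤ ε) ∧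
      ∀ u ∈ U, |g p u| ≤ ε := by
  -- Bolzano–Weierstrass in the finitely many coordinates `Φ`; `q` is fixed before `p`, so that
  -- the `w*`-null `g p` is small at `x q`
  set Λ : X →L[ℝ] (Φ → ℝ) := ContinuousLinearMap.pi fun φ => φ.1
  obtain ⟨c, -, κ, hκ, hconv⟩ := tendsto_subseq_of_bounded (x := fun j => Λ (x j))
    (Metric.isBounded_closedBall (x := 0) (r := ‖Λ‖)) fun j => by
      simpa using Λ.le_opNorm_of_le (hx j)
  have hκ_top := hκ.tendsto_atTop
  have hclose : ∀ᶠ i in atTop, dist (Λ (x (κ i))) c < ε / 2 :=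
    Metric.tendsto_nhds.1 hconv _ (half_pos hε)
  obtain ⟨i₀, hi₀⟩ := hclose.exists
  have hsmall : ∀ u, ∀ δ > 0, ∀ᶠ i in atTop, |g (κ i) u| < δ := fun u δ hδ => by
    simpa [Real.dist_eq] using Metric.tendsto_nhds.1 ((hg u).comp hκ_top) δ hδ
  obtain ⟨i, hi, hm, hgxi, hgq, hU⟩ := (hclose.and <| (hκ_top.eventually_ge_atTop m).and <|
    (hκ_top.eventually hgx).and <| (hsmall (x (κ i₀)) (1 / 4) (by norm_num)).and <|
    (eventually_all_finset U).2 fun u _ => hsmall u ε hε).exists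
  refine ⟨κ i, hm, κ i₀, ?_, fun φ hφ => ?_, fun u hu => (hU u hu).le⟩
  · rw [map_sub]
    linarith [(abs_lt.1 hgq).2]
  · calc |φ (x (κ i) - x (κ i₀))| = ‖Λ (x (κ i) - x (κ i₀)) ⟨φ, hφ⟩‖ := rfl
      _ ≤ ‖Λ (x (κ i)) - Λ (x (κ i₀))‖ := by rw [map_sub]; exact norm_le_pi_norm _ _
      _ ≤ dist (Λ (x (κ i))) c + dist (Λ (x (κ i₀))) c := by
          rw [← dist_eq_norm]; exact dist_triangle_right _ _ _
      _ ≤ ε := by linarith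

lemma tendsto_apply_zero_of_denseRange {ψ : ℕ → StrongDual ℝ X} (hψ : DenseRange ψ) {z : ℕ → X}
    (hz : ∀ᶠ k in atTop, ‖z k‖ ≤ 1) (h : ∀ i, Tendsto (fun k => ψ i (z k)) atTop (𝓝 0))
    (φ : StrongDual ℝ X) : Tendsto (fun k => φ (z k)) atTop (𝓝 0) := by
  refine Metric.tendsto_nhds.2 fun δ hδ => ?_
  obtain ⟨i, hi⟩ := hψ.exists_dist_lt φ (half_pos hδ)
  filter_upwards [hz, Metric.tendsto_nhds.1 (h i) _ (half_pos hδ)] with k hzk hk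
  rw [Real.dist_0_eq_abs] at hk ⊢
  have : |(φ - ψ i) (z k)| ≤ δ / 2 := by
    rw [← Real.norm_eq_abs]
    refine ((φ - ψ i).le_opNorm _).trans ?_
    rw [← dist_eq_norm]
    nlinarith [norm_nonneg (z k), dist_nonneg (x := φ) (y := ψ i)]
  calc |φ (z k)| = |(φ - ψ i) (z k) + ψ i (z k)| := by simp
    _ ≤ |(φ - ψ i) (z k)| + |ψ i (z k)| := abs_add_le _ _
    _ < δ := by linarith

end Functionals

lemma Finset.exists_eq_strongRec {α β : Type*} [DecidableEq α]
    (step : Finset α → (Finset α → β) → β) (d : β) :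
    ∃ F : Finset α → β, ∀ s, F s = step s fun u => if u ⊂ s then F u else d := by
  refine ⟨Finset.strongInduction fun s ih => step s fun u => if h : u ⊂ s then ih u h else d,
    fun s => ?_⟩
  rw [Finset.strongInduction_eq]
  congr 1 with u

lemma Finset.max'_insert_of_forall_lt {α : Type*} [LinearOrder α] {s : Finset α} {k : α}
    (hk : ∀ i ∈ s, i < k) : (insert k s).max' (insert_nonempty k s) = k :=
  le_antisymm (max'_le _ _ _ fun i hi => (mem_insert.1 hi).elim le_of_eq fun h => (hk i h).le)
    (le_max' _ _ (mem_insert_self k s))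

lemma exists_treeRec {β : Type*} [DecidableEq β] (e : Finset ℕ → Finset β → ℕ → ℕ)
    (z : Finset ℕ → Finset β → ℕ → β) (y₀ : β) :
    ∃ (G : Finset ℕ → Finset ℕ) (y : Finset ℕ → β), G ∅ = ∅ ∧ y ∅ = y₀ ∧
      ∀ s k, (∀ i ∈ s, i < k) →
        G (insert k s) = insert (e (G s) ((insert k s).ssubsets.image y) k) (G s) ∧
        y (insert k s) = z (G s) ((insert k s).ssubsets.image y) k := by
  obtain ⟨F, hF⟩ := Finset.exists_eq_strongRec (β := Finset ℕ × β) (fun s prev =>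
    if h : s.Nonempty then
      let T := (prev (s.erase (s.max' h))).1
      let U := s.ssubsets.image fun u => (prev u).2
      (insert (e T U (s.max' h)) T, z T U (s.max' h))
    else (∅, y₀)) (∅, y₀)
  refine ⟨fun s => (F s).1, fun s => (F s).2, by simp [hF ∅], by simp [hF ∅], fun s k hk => ?_⟩
  have hks : k ∉ s := fun h => (hk k h).false
  dsimp only
  rw [hF (insert k s), dif_pos (Finset.insert_nonempty k s), Finset.max'_insert_of_forall_lt hk,
    erase_insert hks]
  dsimp only
  rw [if_pos (Finset.ssubset_insert hks),
    Finset.image_congr fun u hu => by rw [if_pos (mem_ssubsets.1 hu)]]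
  exact ⟨rfl, rfl⟩

section Pruning

variable {X : Type*} [NormedAddCommGroup X] [NormedSpace ℝ X]

lemma WStarNullEvenTree.exists_child {f : Finset ℕ → X →L[ℝ] ℝ} (hf : WStarNullEvenTree f)
    {T : Finset ℕ} (hT : Odd T.card) (Φ : Finset (X →L[ℝ] ℝ)) (U : Finset X) {ε : ℝ}
    (hε : 0 < ε) (m : ℕ) :
    ∃ e : ℕ, ∃ y : X, m ≤ e ∧ (∀ i ∈ T, i < e) ∧ ‖y‖ = 1 ∧ 1 / 4 ≤ f (insert e T) y ∧
      (∀ φ ∈ Φ, |φ y| ≤ ε) ∧ ∀ u ∈ U, |f (insert e T) u| ≤ ε := by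
  have hnorm : ∀ j, (∀ i ∈ T, i < j) → ‖f (insert j T)‖ = 1 := fun j hj =>
    hf.1 _ (by rw [card_insert_of_notMem fun h => (hj j h).false]; exact hT.add_one)
  have hx : ∀ j, ∃ x : X, ‖x‖ ≤ 1 ∧ ((∀ i ∈ T, i < j) → 3 / 4 ≤ f (insert j T) x) := fun j => by
    by_cases hj : ∀ i ∈ T, i < j
    · obtain ⟨x, hx₁, hx⟩ := exists_norm_eq_one_lt_apply (f (insert j T)) (r := 3 / 4) (by norm_num)
        (by rw [hnorm j hj]; norm_num)
      exact ⟨x, hx₁.le, fun _ => hx.le⟩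
    · exact ⟨0, by simp, fun h => absurd h hj⟩
  choose x hx₁ hx using hx
  have habove : ∀ᶠ j in atTop, ∀ i ∈ T, i < j := (eventually_all_finset T).2 fun i _ =>
    eventually_gt_atTop i
  obtain ⟨p, hp, q, hpq, hΦ, hU⟩ := exists_separated_pair hx₁ (habove.mono hx)
    (hf.2 T hT) Φ U (half_pos hε) (max m (T.sup id + 1))
  have hpT : ∀ i ∈ T, i < p := fun i hi => by
    have := le_sup (f := id) hi; simp only [id] at this; omega
  set d := x p - x q
  have hd₂ : ‖d‖ ≤ 2 := (norm_sub_le _ _).trans (by linarith [hx₁ p, hx₁ q])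
  have hd₁ : 1 / 2 ≤ ‖d‖ := hpq.trans <| (le_abs_self _).trans <|
    ((f (insert p T)).le_opNorm d).trans_eq (by rw [hnorm p hpT, one_mul])
  have hd₀ : 0 < ‖d‖ := by linarith
  refine ⟨p, ‖d‖⁻¹ • d, le_of_max_le_left hp, hpT, ?_, ?_, fun φ hφ => ?_,
    fun u hu => (hU u hu).trans (by linarith)⟩
  · rw [norm_smul, norm_inv, norm_norm, inv_mul_cancel₀ hd₀.ne']
  · rw [map_smul, smul_eq_mul, inv_mul_eq_div, le_div_iff₀ hd₀]
    linarith
  · rw [map_smul, smul_eq_mul, abs_mul, abs_inv, abs_norm, inv_mul_le_iff₀ hd₀]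
    nlinarith [hΦ φ hφ]

/-- `G` relabels the nodes of the even tree `f`, and `y` is an even tree in `X` whose node at `s`
is normed by `f (G s)` while being almost annihilated by the functionals at the other nodes
along any branch, with errors `η`. -/
structure IsPrunedTree (f : Finset ℕ → X →L[ℝ] ℝ) (η : ℕ → ℝ) (G : Finset ℕ → Finset ℕ)
    (y : Finset ℕ → X) : Prop where
  map_empty : G ∅ = ∅
  map_insert : ∀ s k, (∀ i ∈ s, i < k) →
    ∃ e, k ≤ e ∧ (∀ i ∈ G s, i < e) ∧ G (insert k s) = insert e (G s)
  wnEvenTree : WNEvenTree y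
  quarter_le_apply : ∀ s k, (∀ i ∈ s, i < k) → Odd s.card →
    1 / 4 ≤ f (G (insert k s)) (y (insert k s))
  abs_apply_le_of_subset : ∀ s k, (∀ i ∈ s, i < k) → Odd s.card → ∀ t ⊆ G s, Even t.card →
    |f t (y (insert k s))| ≤ η k
  abs_apply_le_of_ssubset : ∀ s k, (∀ i ∈ s, i < k) → Odd s.card → ∀ u ⊂ insert k s,
    |f (G (insert k s)) (y u)| ≤ η k

theorem exists_isPrunedTree (hsep : TopologicalSpace.SeparableSpace (StrongDual ℝ X))
    {f : Finset ℕ → X →L[ℝ] ℝ} (hf : WStarNullEvenTree f) {η : ℕ → ℝ} (hη : ∀ k, 0 < η k)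
    (hη₀ : Tendsto η atTop (𝓝 0)) : ∃ G y, IsPrunedTree f η G y := by
  classical
  set ψ := TopologicalSpace.denseSeq (StrongDual ℝ X)
  -- at a child of an odd node `T` the new vector must be small against the functionals at the
  -- even nodes below `T` (for the estimates) and against `ψ i`, `i < k` (for weak nullness)
  set Φ : Finset ℕ → ℕ → Finset (X →L[ℝ] ℝ) := fun T k =>
    (T.powerset.filter fun t => Even t.card).image f ∪ (range k).image ψ
  have hstep : ∀ (T : Finset ℕ) (U : Finset X) (k : ℕ), ∃ e : ℕ, ∃ z : X,
      k ≤ e ∧ (∀ i ∈ T, i < e) ∧ (Odd T.card → ‖z‖ = 1 ∧ 1 / 4 ≤ f (insert e T) z ∧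
        (∀ φ ∈ Φ T k, |φ z| ≤ η k) ∧ ∀ u ∈ U, |f (insert e T) u| ≤ η k) := fun T U k => by
    by_cases hT : Odd T.card
    · obtain ⟨e, z, h₁, h₂, h₃⟩ := hf.exists_child hT (Φ T k) U (hη k) k
      exact ⟨e, z, h₁, h₂, fun _ => h₃⟩
    · refine ⟨max k (T.sup id + 1), 0, le_max_left _ _, fun i hi => ?_, fun h => absurd h hT⟩
      have := le_sup (f := id) hi; simp only [id] at this; omega
  choose e z hek heT hz using hstep
  obtain ⟨y₀, hy₀, -⟩ :=
    exists_norm_eq_one_lt_apply (f ∅) le_rfl (by rw [hf.1 ∅ (by simp)]; norm_num)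
  obtain ⟨G, y, hG_empty, hy_empty, hinsert⟩ := exists_treeRec e z y₀
  have hcard : ∀ s, (G s).card = s.card := fun s => by
    induction s using Finset.induction_on_max with
    | empty => rw [hG_empty]
    | insert k s hk ih =>
      rw [(hinsert s k hk).1, card_insert_of_notMem fun h => (heT _ _ _ _ h).false, ih,
        card_insert_of_notMem fun h => (hk k h).false]
  have hchild : ∀ s k, (∀ i ∈ s, i < k) → Odd s.card →
      ‖y (insert k s)‖ = 1 ∧ 1 / 4 ≤ f (G (insert k s)) (y (insert k s)) ∧
        (∀ φ ∈ Φ (G s) k, |φ (y (insert k s))| ≤ η k) ∧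
        ∀ u ⊂ insert k s, |f (G (insert k s)) (y u)| ≤ η k := fun s k hk hs => by
    rw [(hinsert s k hk).1, (hinsert s k hk).2]
    obtain ⟨h₁, h₂, h₃, h₄⟩ := hz (G s) ((insert k s).ssubsets.image y) k (by rwa [hcard])
    exact ⟨h₁, h₂, h₃, fun u hu => h₄ _ (mem_image_of_mem _ (mem_ssubsets.2 hu))⟩
  refine ⟨G, y, hG_empty, fun s k hk => ⟨_, hek _ _ _, heT _ _ _, (hinsert s k hk).1⟩,
    ⟨fun s hs => ?_, fun s hs φ => ?_⟩, fun s k hk hs => (hchild s k hk hs).2.1,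
    fun s k hk hs t ht hev => (hchild s k hk hs).2.2.1 _ ?_,
    fun s k hk hs => (hchild s k hk hs).2.2.2⟩
  · induction s using Finset.induction_on_max with
    | empty => rwa [hy_empty]
    | insert k s hk _ =>
      refine (hchild s k hk ?_).1
      rwa [card_insert_of_notMem fun h => (hk k h).false, Nat.even_add_one,
        Nat.not_even_iff_odd] at hs
  · have habove : ∀ᶠ k in atTop, ∀ i ∈ s, i < k :=
      (eventually_all_finset s).2 fun i _ => eventually_gt_atTop i
    refine tendsto_apply_zero_of_denseRange (TopologicalSpace.denseRange_denseSeq _)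
      (habove.mono fun k hk => (hchild s k hk hs).1.le) (fun i => ?_) φ
    refine squeeze_zero_norm' ?_ hη₀
    filter_upwards [habove, eventually_gt_atTop i] with k hk hik
    exact (hchild s k hk hs).2.2.1 _ (mem_union_right _ (mem_image_of_mem _ (mem_range.2 hik)))
  · exact mem_union_left _ (mem_image_of_mem f (mem_filter.2 ⟨mem_powerset.2 ht, hev⟩))

end Pruning

section Branches

lemma image_range_succ (n : ℕ → ℕ) (i : ℕ) :
    (range (i + 1)).image n = insert (n i) ((range i).image n) := by
  rw [range_add_one, image_insert]

variable {n : ℕ → ℕ}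

lemma StrictMono.forall_mem_image_range_lt (hn : StrictMono n) (i : ℕ) :
    ∀ a ∈ (range i).image n, a < n i := by
  intro a ha
  obtain ⟨l, hl, rfl⟩ := mem_image.1 ha
  exact hn (Finset.mem_range.1 hl)

lemma StrictMono.card_image_range (hn : StrictMono n) (i : ℕ) : ((range i).image n).card = i := by
  rw [card_image_of_injective _ hn.injective, card_range]

end Branches

namespace IsPrunedTree

variable {X : Type*} [NormedAddCommGroup X] [NormedSpace ℝ X] {f : Finset ℕ → X →L[ℝ] ℝ}
  {η : ℕ → ℝ} {G : Finset ℕ → Finset ℕ} {y : Finset ℕ → X} {nt n : ℕ → ℕ}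

lemma exists_branch (h : IsPrunedTree f η G y) (hnt : StrictMono nt) :
    ∃ n : ℕ → ℕ, StrictMono n ∧ (∀ i, nt i ≤ n i) ∧
      ∀ i : ℕ, G ((range i).image nt) = (range i).image n := by
  choose n hn_ge hn_gt hn using fun i =>
    h.map_insert ((range i).image nt) (nt i) (hnt.forall_mem_image_range_lt i)
  have hG : ∀ i : ℕ, G ((range i).image nt) = (range i).image n := fun i => by
    induction i with
    | zero => simpa using h.map_empty
    | succ i ih => rw [image_range_succ, hn, ih, image_range_succ]
  refine ⟨n, strictMono_nat_of_lt_succ fun i => hn_gt (i + 1) _ ?_, hn_ge, hG⟩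
  rw [hG, image_range_succ]
  exact mem_insert_self _ _

lemma quarter_le_apply_branch (h : IsPrunedTree f η G y) (hnt : StrictMono nt)
    (hbranch : ∀ i : ℕ, G ((range i).image nt) = (range i).image n) (l : ℕ) :
    1 / 4 ≤ f (branchSet n l) (y (branchSet nt l)) := by
  have := h.quarter_le_apply _ _ (hnt.forall_mem_image_range_lt (2 * l + 1))
    (by rw [hnt.card_image_range]; exact odd_two_mul_add_one l)
  rwa [← image_range_succ, hbranch] at this

lemma abs_apply_branch_le (h : IsPrunedTree f η G y) (hnt : StrictMono nt)
    (hbranch : ∀ i : ℕ, G ((range i).image nt) = (range i).image n) (hn : StrictMono n) {l j : ℕ}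
    (hlj : l ≠ j) :
    |f (branchSet n l) (y (branchSet nt j))| ≤ η (nt (2 * max l j + 1)) := by
  rcases hlj.lt_or_gt with hlt | hgt
  · rw [max_eq_right hlt.le]
    have := h.abs_apply_le_of_subset _ _ (hnt.forall_mem_image_range_lt (2 * j + 1))
      (by rw [hnt.card_image_range]; exact odd_two_mul_add_one j) (branchSet n l)
      (by rw [hbranch]; exact image_subset_image (range_subset_range.2 (by omega)))
      (by rw [branchSet, hn.card_image_range]; exact ⟨l + 1, by ring⟩)
    rwa [← image_range_succ] at this
  · rw [max_eq_left hgt.le]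
    have := h.abs_apply_le_of_ssubset _ _ (hnt.forall_mem_image_range_lt (2 * l + 1))
      (by rw [hnt.card_image_range]; exact odd_two_mul_add_one l) (branchSet nt j) ?_
    · rwa [← image_range_succ, hbranch] at this
    rw [← image_range_succ]
    refine ssubset_of_subset_of_ne (image_subset_image (range_subset_range.2 (by omega)))
      fun he => ?_
    have := congrArg card he
    rw [branchSet, hnt.card_image_range, hnt.card_image_range] at this
    omega

end IsPrunedTree

theorem dual_lower_wstar_tree_estimates_general
    {X : Type*} [NormedAddCommGroup X] [NormedSpace ℝ X]
    {V : Type*} [NormedAddCommGroup V] [NormedSpace ℝ V]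
    {W : Type*} [NormedAddCommGroup W] [NormedSpace ℝ W]
    (hXsep : TopologicalSpace.SeparableSpace (StrongDual ℝ X))
    (v : ℕ → V) (w : ℕ → W)
    (hvnorm : IsNormalized v) (hvuncond : IsOneUnconditional v)
    (hvright : RightDominant v)
    (hw : IsBiorthDual v w)
    (hX : UpperTree v X) :
    ∃ C : ℝ, 1 ≤ C ∧ LowerWStarTreeC w X C := by
  obtain ⟨C, hC, hCtree⟩ := hX
  obtain ⟨D, hD, hDright⟩ := hvright
  refine ⟨6 * (C * D), by nlinarith, fun f hf => ?_⟩
  have hη : Tendsto (fun k => (1 / 2 : ℝ) ^ k / 64) atTop (𝓝 0) := by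
    simpa using (tendsto_pow_atTop_nhds_zero_of_lt_one (r := (1 / 2 : ℝ)) (by norm_num)
      (by norm_num)).div_const 64
  obtain ⟨G, y, hGy⟩ := exists_isPrunedTree hXsep hf (fun k => by positivity) hη
  obtain ⟨nt, hnt, hdom⟩ := hCtree y hGy.wnEvenTree
  obtain ⟨n, hn, hle, hbranch⟩ := hGy.exists_branch hnt
  have hdouble : StrictMono fun l : ℕ => 2 * l := strictMono_mul_left_of_pos two_pos
  refine ⟨n, hn, hw.domBy_of_almostBiorthogonal hvnorm hvuncond (hn.comp hdouble) (by positivity)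
    (hdom.trans (hDright _ _ (hnt.comp hdouble) (hn.comp hdouble) fun l => hle _) (by linarith))
    (hGy.quarter_le_apply_branch hnt hbranch) fun l j hlj => ?_⟩
  refine (hGy.abs_apply_branch_le hnt hbranch hn hlj).trans ?_
  have := hnt.id_le (2 * max l j + 1)
  refine div_le_div_of_nonneg_right
    (pow_le_pow_of_le_one (by norm_num) (by norm_num) ?_) (by norm_num)
  simp only [id] at this; omega

/-- Lemma 2.7: if `X` has separable dual and satisfies subsequential `V` upper tree
estimates, then `X^*` satisfies subsequential `V^*` lower `w^*` tree estimates. -/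
theorem dual_lower_wstar_tree_estimates
    {X : Type*} [NormedAddCommGroup X] [NormedSpace ℝ X] [CompleteSpace X]
    {V : Type*} [NormedAddCommGroup V] [NormedSpace ℝ V] [CompleteSpace V]
    {W : Type*} [NormedAddCommGroup W] [NormedSpace ℝ W] [CompleteSpace W]
    (hXsep : TopologicalSpace.SeparableSpace (StrongDual ℝ X))
    (v : ℕ → V) (w : ℕ → W)
    (hvnorm : IsNormalized v) (hvuncond : IsOneUnconditional v)
    (hvbasic : IsBasicSeq v) (hvright : RightDominant v)
    (hw : IsBiorthDual v w)
    (hX : UpperTree v X) :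
    ∃ C : ℝ, 1 ≤ C ∧ LowerWStarTreeC w X C :=
  dual_lower_wstar_tree_estimates_general hXsep v w hvnorm hvuncond hvright hw hX
end
end

section
/- Let X be a closed subspace of a Banach space Z with a shrinking FDD (E_i) with projection constant C, and for m in N let Z_m be the closed span of (E_i : i > m). Let eta > 0 satisfy (1+C)eta < 1, and let (z_i) be a sequence in the unit sphere S_X with dist(z_i, Z_i) < eta for all i. Then there exist a subsequence (x_i) of (z_i) and a weakly null sequence (y_i) in S_X such that ||x_i - y_i|| < 2(1+C)eta for all i. -/
open Filter Topology Set

noncomputable section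

/-!
Pick `t i ∈ Z_{i+1}` with `‖z i - t i‖ < η`. Since the FDD is shrinking, the bounded sequence
`(t i)` is weakly null and `Z^*` is separable, so a subsequence `(z (σ i))` is weakly Cauchy.
By Mazur's lemma some convex combination of `(t (σ j))_{j ≥ i}` is small, and the same convex
combination `u i` of `(z (σ j))_{j ≥ i}` has norm `< (1 + C) η`. As `(u i)` has the same weak
limits as `(z (σ i))`, the differences `z (σ i) - u i` are weakly null, and normalising them
moves `z (σ i)` by at most `2 ‖u i‖`.
-/

namespace FDD

variable {Z : Type*} [NormedAddCommGroup Z] [NormedSpace ℝ Z] (F : FDD Z)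

theorem P_eq_zero_of_mem_E {i j : ℕ} (hji : j ≠ i) {x : Z} (hx : x ∈ F.E i) : F.P j x = 0 := by
  have hmem : ∀ k, Pi.single (M := fun _ => Z) i x k ∈ F.E k := fun k => by
    rcases eq_or_ne k i with rfl | hk
    · simpa using hx
    · simp [hk]
  have hsum : Tendsto (fun n => ∑ k ∈ Finset.range n, Pi.single (M := fun _ => Z) i x k)
      atTop (𝓝 x) :=
    tendsto_atTop_of_eventually_const (i₀ := i + 1) fun n hn => by
      simp [Finset.sum_pi_single', Nat.lt_of_succ_le hn]
  simpa [hji] using (F.unique x _ hmem hsum j).symm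

theorem P_eq_zero_of_mem_tail {j m : ℕ} (hjm : j < m) {x : Z} (hx : x ∈ F.tail m) :
    F.P j x = 0 := by
  have hker : (⨆ i ∈ Ici m, F.E i) ≤ LinearMap.ker (F.P j : Z →ₗ[ℝ] Z) :=
    iSup₂_le fun i hi y hy => LinearMap.mem_ker.mpr (F.P_eq_zero_of_mem_E (hjm.trans_le hi).ne hy)
  exact closure_minimal hker (F.P j).isClosed_ker hx

theorem proj_range_apply_eq_zero_of_mem_tail {n m : ℕ} (hnm : n ≤ m) {x : Z}
    (hx : x ∈ F.tail m) : F.proj (Finset.range n) x = 0 := by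
  rw [proj, sum_apply]
  exact Finset.sum_eq_zero fun j hj =>
    F.P_eq_zero_of_mem_tail ((Finset.mem_range.mp hj).trans_le hnm) hx

theorem one_le_of_isProjConst {C : ℝ} (hC : F.IsProjConst C) {x : Z} (hx : ‖x‖ = 1) :
    1 ≤ C := by
  have hlim : Tendsto (fun n => ‖F.proj (Finset.Icc 0 n) x‖) atTop (𝓝 1) := by
    have := ((F.sum_eq x).comp (tendsto_add_atTop_nat 1)).norm
    rw [hx] at this
    refine this.congr fun n => ?_
    simp [proj, ← Nat.range_succ_eq_Icc_zero]
  exact le_of_tendsto' hlim fun n => hC.1 ⟨0, n, x, hx.le, rfl⟩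

theorem Shrinking.weaklyNullSeq_of_mem_tail {F : FDD Z} (hF : F.Shrinking) {t : ℕ → Z}
    {M : ℝ} (htM : ∀ j, ‖t j‖ ≤ M) {m : ℕ → ℕ} (hm : Tendsto m atTop atTop)
    (ht : ∀ j, t j ∈ F.tail (m j)) : WeaklyNullSeq t := by
  intro φ
  refine squeeze_zero_norm (a := fun j => ‖φ - φ.comp (F.proj (Finset.range (m j)))‖ * M)
    (fun j => ?_) (by simpa using ((hF φ).comp hm).mul_const M)
  have hφt : φ (t j) = (φ - φ.comp (F.proj (Finset.range (m j)))) (t j) := by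
    simp [F.proj_range_apply_eq_zero_of_mem_tail le_rfl (ht j)]
  rw [hφt]
  exact ContinuousLinearMap.le_opNorm_of_le _ (htM j)

/-- `Z^*` is the closure of the union of the finite-dimensional spaces `Z^* ∘ P_{[0,n)}`. -/
theorem Shrinking.separableSpace_dual {F : FDD Z} (hF : F.Shrinking) :
    TopologicalSpace.SeparableSpace (Z →L[ℝ] ℝ) := by
  classical
  have := F.finDim
  let G : ℕ → Submodule ℝ Z := fun n => (Finset.range n).sup F.E
  have hPG : ∀ n x, F.proj (Finset.range n) x ∈ G n := fun n x => by
    rw [proj, sum_apply]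
    exact Submodule.sum_mem _ fun i hi => Finset.le_sup (f := F.E) hi (F.mem_E i x)
  let Q : ∀ n, Z →L[ℝ] G n := fun n => (F.proj (Finset.range n)).codRestrict (G n) (hPG n)
  have hsep : TopologicalSpace.IsSeparable (⋃ n, range fun g : G n →L[ℝ] ℝ => g.comp (Q n)) :=
    .iUnion fun n => TopologicalSpace.isSeparable_range (by fun_prop)
  rw [← TopologicalSpace.isSeparable_univ_iff]
  refine hsep.closure.mono fun ψ _ => mem_closure_of_tendsto (b := atTop)
    (f := fun n => ψ.comp (F.proj (Finset.range n))) ?_ (.of_forall fun n => ?_)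
  · simpa [tendsto_iff_norm_sub_tendsto_zero, norm_sub_rev] using hF ψ
  · exact mem_iUnion.mpr ⟨n, ψ.comp (G n).subtypeL, rfl⟩

end FDD

section WeakSequences

variable {E : Type*} [NormedAddCommGroup E] [NormedSpace ℝ E]

theorem cauchySeq_apply_of_denseRange {x : ℕ → E} {M : ℝ} (hx : ∀ i, ‖x i‖ ≤ M)
    {φs : ℕ → E →L[ℝ] ℝ} (hφs : DenseRange φs)
    (hcauchy : ∀ k, CauchySeq fun i => φs k (x i)) (φ : E →L[ℝ] ℝ) :
    CauchySeq fun i => φ (x i) := by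
  rw [Metric.cauchySeq_iff]
  intro ε hε
  obtain ⟨k, hk⟩ := hφs.exists_mem_open
    (isOpen_lt (f := fun ψ : E →L[ℝ] ℝ => 2 * ‖φ - ψ‖ * M) (by fun_prop) continuous_const)
    ⟨φ, show 2 * ‖φ - φ‖ * M < ε / 2 by simpa using half_pos hε⟩
  obtain ⟨N, hN⟩ := Metric.cauchySeq_iff.mp (hcauchy k) (ε / 2) (half_pos hε)
  have hclose : ∀ i, dist (φ (x i)) (φs k (x i)) ≤ ‖φ - φs k‖ * M := fun i => by
    rw [dist_eq_norm, ← sub_apply]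
    exact ContinuousLinearMap.le_opNorm_of_le _ (hx i)
  refine ⟨N, fun m hm n hn => ?_⟩
  calc dist (φ (x m)) (φ (x n))
      ≤ dist (φ (x m)) (φs k (x m)) + dist (φs k (x m)) (φs k (x n))
        + dist (φs k (x n)) (φ (x n)) := dist_triangle4 _ _ _ _
    _ < ε := by
      rw [dist_comm (φs k (x n))]
      linarith [hclose m, hclose n, hN m hm n hn, show 2 * ‖φ - φs k‖ * M < ε / 2 from hk]

theorem exists_strictMono_forall_tendsto_apply [TopologicalSpace.SeparableSpace (E →L[ℝ] ℝ)]
    {x : ℕ → E} {M : ℝ} (hx : ∀ i, ‖x i‖ ≤ M) :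
    ∃ σ : ℕ → ℕ, StrictMono σ ∧
      ∀ φ : E →L[ℝ] ℝ, ∃ l, Tendsto (fun i => φ (x (σ i))) atTop (𝓝 l) := by
  obtain ⟨φs, hφs⟩ := TopologicalSpace.exists_dense_seq (E →L[ℝ] ℝ)
  have hbox : ∀ i, (fun k => φs k (x i)) ∈
      univ.pi fun k => Icc (-(‖φs k‖ * M)) (‖φs k‖ * M) := fun i k _ =>
    abs_le.mp ((Real.norm_eq_abs _).symm.trans_le ((φs k).le_opNorm_of_le (hx i)))
  obtain ⟨g, -, σ, hσ, hg⟩ := (isCompact_univ_pi fun k => isCompact_Icc).tendsto_subseq hbox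
  exact ⟨σ, hσ, fun φ => cauchySeq_tendsto_of_complete <|
    cauchySeq_apply_of_denseRange (fun i => hx (σ i)) hφs
      (fun k => (tendsto_pi_nhds.mp hg k).cauchySeq) φ⟩

/-- Mazur's lemma. -/
theorem WeaklyNullSeq.exists_mem_convexHull_norm_lt {t : ℕ → E} (ht : WeaklyNullSeq t)
    (i : ℕ) {ε : ℝ} (hε : 0 < ε) : ∃ c ∈ convexHull ℝ (t '' Ici i), ‖c‖ < ε := by
  by_contra! hfar
  have h0 : (0 : E) ∉ closure (convexHull ℝ (t '' Ici i)) := fun h0 => by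
    obtain ⟨c, hc, hdist⟩ := Metric.mem_closure_iff.mp h0 ε hε
    rw [dist_comm, dist_zero_right] at hdist
    exact (hfar c hc).not_gt hdist
  obtain ⟨f, s, hf0, hfs⟩ := geometric_hahn_banach_point_closed
    (convex_convexHull ℝ _).closure isClosed_closure h0
  have hs : 0 < s := by simpa using hf0
  obtain ⟨j, hfj, hij⟩ := (((ht f).eventually_lt_const hs).and (eventually_ge_atTop i)).exists
  exact (hfs _ (subset_closure (subset_convexHull ℝ _ ⟨j, hij, rfl⟩))).not_gt hfj

theorem exists_mem_convexHull_norm_sub_le {ι : Type*} {x t : ι → E} {η : ℝ}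
    (hxt : ∀ j, ‖x j - t j‖ ≤ η) {s : Set ι} {c : E} (hc : c ∈ convexHull ℝ (t '' s)) :
    ∃ u ∈ convexHull ℝ (x '' s), ‖u - c‖ ≤ η := by
  -- `u` takes the convex weights of `c`: both arise from one point of the hull of the pairs.
  let p : ι → E × E := fun j => (x j, t j)
  have hclose : convexHull ℝ (p '' s) ⊆ (LinearMap.fst ℝ E E - LinearMap.snd ℝ E E) ⁻¹'
      Metric.closedBall 0 η :=
    convexHull_min (by rintro _ ⟨j, -, rfl⟩; simpa using hxt j)
      ((convex_closedBall 0 η).linear_preimage _)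
  have hc' : c ∈ LinearMap.snd ℝ E E '' convexHull ℝ (p '' s) := by
    rwa [LinearMap.image_convexHull, ← image_comp]
  obtain ⟨q, hq, rfl⟩ := hc'
  refine ⟨q.1, ?_, by simpa using hclose hq⟩
  have hq1 : q.1 ∈ LinearMap.fst ℝ E E '' convexHull ℝ (p '' s) := mem_image_of_mem _ hq
  rwa [LinearMap.image_convexHull, ← image_comp] at hq1

theorem exists_mem_convexHull_norm_lt_of_weaklyNullSeq {x t : ℕ → E} (ht : WeaklyNullSeq t)
    {η : ℝ} (hxt : ∀ j, ‖x j - t j‖ ≤ η) (i : ℕ) {δ : ℝ} (hηδ : η < δ) :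
    ∃ u ∈ convexHull ℝ (x '' Ici i), ‖u‖ < δ := by
  obtain ⟨c, hc, hcε⟩ := ht.exists_mem_convexHull_norm_lt i (sub_pos.mpr hηδ)
  obtain ⟨u, hu, huc⟩ := exists_mem_convexHull_norm_sub_le hxt hc
  exact ⟨u, hu, by linarith [norm_le_insert' u c]⟩

theorem tendsto_of_mem_convexHull_image_Ici {x u : ℕ → E} {l : E}
    (hx : Tendsto x atTop (𝓝 l)) (hu : ∀ i, u i ∈ convexHull ℝ (x '' Ici i)) :
    Tendsto u atTop (𝓝 l) := by
  rw [Metric.tendsto_atTop] at hx ⊢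
  intro ε hε
  obtain ⟨N, hN⟩ := hx ε hε
  refine ⟨N, fun i hi => convexHull_min ?_ (convex_ball l ε) (hu i)⟩
  rintro _ ⟨j, hj, rfl⟩
  exact hN j (hi.trans hj)

theorem WeaklyNullSeq.smul {v : ℕ → E} (hv : WeaklyNullSeq v) {a : ℕ → ℝ} {K : ℝ}
    (ha : ∀ i, |a i| ≤ K) : WeaklyNullSeq fun i => a i • v i := by
  intro φ
  simp only [map_smul, smul_eq_mul]
  exact isBoundedUnder_le_mul_tendsto_zero ⟨K, eventually_map.mpr (.of_forall ha)⟩ (hv φ)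

theorem norm_sub_inv_norm_smul_le {x : E} (hx : ‖x‖ = 1) (v : E) :
    ‖x - ‖v‖⁻¹ • v‖ ≤ 2 * ‖x - v‖ := by
  have hv : ‖v - ‖v‖⁻¹ • v‖ ≤ |‖v‖ - ‖x‖| := by
    rcases eq_or_ne v 0 with rfl | hv0
    · simp
    have hsmul : v - ‖v‖⁻¹ • v = (1 - ‖v‖⁻¹) • v := by rw [sub_smul, one_smul]
    have hscalar : (1 - ‖v‖⁻¹) * ‖v‖ = ‖v‖ - 1 := by
      rw [sub_mul, one_mul, inv_mul_cancel₀ (norm_ne_zero_iff.mpr hv0)]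
    rw [hx, hsmul, norm_smul, Real.norm_eq_abs, ← hscalar, abs_mul, abs_norm]
  calc ‖x - ‖v‖⁻¹ • v‖ ≤ ‖x - v‖ + ‖v - ‖v‖⁻¹ • v‖ := norm_sub_le_norm_sub_add_norm_sub _ _ _
    _ ≤ 2 * ‖x - v‖ := by
      linarith [hv.trans (abs_norm_sub_norm_le v x), norm_sub_rev v x]

theorem exists_weaklyNullSeq_norm_sub_lt {X : Submodule ℝ E} {x : ℕ → E}
    (hxX : ∀ i, x i ∈ X) (hx1 : ∀ i, ‖x i‖ = 1)
    (hx : ∀ φ : E →L[ℝ] ℝ, ∃ l, Tendsto (fun i => φ (x i)) atTop (𝓝 l)) {δ : ℝ} (hδ : δ < 1)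
    (hsmall : ∀ i, ∃ u ∈ convexHull ℝ (x '' Ici i), ‖u‖ < δ) :
    ∃ y : ℕ → E, (∀ i, y i ∈ X) ∧ (∀ i, ‖y i‖ = 1) ∧ WeaklyNullSeq y ∧
      ∀ i, ‖x i - y i‖ < 2 * δ := by
  choose u hu huδ using hsmall
  set v : ℕ → E := fun i => x i - u i
  have hv : ∀ i, 1 - δ < ‖v i‖ := fun i => by
    linarith [hx1 i, huδ i, norm_sub_norm_le (x i) (u i)]
  have hvX : ∀ i, v i ∈ X := fun i => X.sub_mem (hxX i)
    (convexHull_min (by rintro _ ⟨j, -, rfl⟩; exact hxX j) X.convex (hu i))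
  have hvnull : WeaklyNullSeq v := fun φ => by
    obtain ⟨l, hl⟩ := hx φ
    have hφu : ∀ i, φ (u i) ∈ convexHull ℝ ((fun j => φ (x j)) '' Ici i) := fun i => by
      have := mem_image_of_mem φ.toLinearMap (hu i)
      rwa [LinearMap.image_convexHull, image_image] at this
    simpa [v] using hl.sub (tendsto_of_mem_convexHull_image_Ici hl hφu)
  refine ⟨fun i => ‖v i‖⁻¹ • v i, fun i => X.smul_mem _ (hvX i),
    fun i => norm_smul_inv_norm (norm_pos_iff.mp ((sub_pos.mpr hδ).trans (hv i))),
    hvnull.smul (K := (1 - δ)⁻¹) fun i => ?_, fun i => ?_⟩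
  · rw [abs_inv, abs_norm]
    exact inv_anti₀ (sub_pos.mpr hδ) (hv i).le
  · calc ‖x i - ‖v i‖⁻¹ • v i‖ ≤ 2 * ‖x i - v i‖ := norm_sub_inv_norm_smul_le (hx1 i) (v i)
      _ < 2 * δ := by simpa [v] using huδ i

end WeakSequences

theorem near_tail_perturbation_weakly_null_general
    {Z : Type*} [NormedAddCommGroup Z] [NormedSpace ℝ Z]
    (F : FDD Z) (hFsh : F.Shrinking) (C : ℝ) (hC : F.IsProjConst C)
    (X : Submodule ℝ Z)
    (η : ℝ) (hη : 0 < η) (hηC : (1 + C) * η < 1)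
    (z : ℕ → Z) (hzX : ∀ i, z i ∈ X) (hz1 : ∀ i, ‖z i‖ = 1)
    (hzd : ∀ i, Metric.infDist (z i) (F.tail (i+1)) < η) :
    ∃ σ : ℕ → ℕ, StrictMono σ ∧ ∃ y : ℕ → Z,
      (∀ i, y i ∈ X) ∧ (∀ i, ‖y i‖ = 1) ∧ WeaklyNullSeq y ∧
      ∀ i, ‖z (σ i) - y i‖ < 2 * (1 + C) * η := by
  have hηδ : η < (1 + C) * η := by nlinarith [F.one_le_of_isProjConst hC (hz1 0)]
  have hnear : ∀ i, ∃ t ∈ F.tail (i + 1), dist (z i) t < η := fun i =>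
    (Metric.infDist_lt_iff ⟨0, subset_closure (zero_mem _)⟩).mp (hzd i)
  choose t htail hzt using hnear
  have hzt' : ∀ i, ‖z i - t i‖ ≤ η := fun i => (dist_eq_norm (z i) (t i) ▸ hzt i).le
  have ht : WeaklyNullSeq t := hFsh.weaklyNullSeq_of_mem_tail (M := 1 + η)
    (fun i => by linarith [hz1 i, hzt' i, norm_le_insert' (t i) (z i), norm_sub_rev (t i) (z i)])
    (tendsto_add_atTop_nat 1) htail
  have := hFsh.separableSpace_dual
  obtain ⟨σ, hσ, hσlim⟩ := exists_strictMono_forall_tendsto_apply fun i => (hz1 i).le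
  obtain ⟨y, hyX, hy1, hy, hzy⟩ := exists_weaklyNullSeq_norm_sub_lt (fun i => hzX (σ i))
    (fun i => hz1 (σ i)) hσlim hηC fun i =>
      exists_mem_convexHull_norm_lt_of_weaklyNullSeq (fun φ => (ht φ).comp hσ.tendsto_atTop)
        (fun j => hzt' (σ j)) i hηδ
  exact ⟨σ, hσ, y, hyX, hy1, hy, fun i => (hzy i).trans_eq (by ring)⟩

/-- The preliminary observation in the proof of Proposition 2.5: a sequence in the unit
sphere of a closed subspace `X` which is asymptotically close to the tails `Z_i` of a
shrinking FDD has a subsequence which is a small perturbation of a weakly null sequence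
in the unit sphere of `X`. -/
theorem near_tail_perturbation_weakly_null
    {Z : Type*} [NormedAddCommGroup Z] [NormedSpace ℝ Z] [CompleteSpace Z]
    (F : FDD Z) (hFsh : F.Shrinking) (C : ℝ) (hC : F.IsProjConst C)
    (X : Submodule ℝ Z) (hXcl : IsClosed (X : Set Z))
    (η : ℝ) (hη : 0 < η) (hηC : (1 + C) * η < 1)
    (z : ℕ → Z) (hzX : ∀ i, z i ∈ X) (hz1 : ∀ i, ‖z i‖ = 1)
    (hzd : ∀ i, Metric.infDist (z i) (F.tail (i+1)) < η) :
    ∃ σ : ℕ → ℕ, StrictMono σ ∧ ∃ y : ℕ → Z,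
      (∀ i, y i ∈ X) ∧ (∀ i, ‖y i‖ = 1) ∧ WeaklyNullSeq y ∧
      ∀ i, ‖z (σ i) - y i‖ < 2 * (1 + C) * η :=
  near_tail_perturbation_weakly_null_general F hFsh C hC X η hη hηC z hzX hz1 hzd
end
end
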